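/- arXiv:0801.4229 — 6 statements merged into one kernel-verified Lean document; each statement's English description precedes it below -/
import Mathlib

section
/- For the vector r = (2, 2, ..., 2) of length p ≥ 2, the set {π ∈ NC₂(⟨2⟩_p) : π ∨ 1̂_r = 1̂_{2p}} consists of exactly one element, namely the non-crossing pairing {{2p,1}, {2,3}, {4,5}, ..., {2p−2, 2p−1}}. -/
private lemma even_card_invol {n : ℕ} (S : Finset (Fin n)) (f : Fin n → Fin n)
    (h2 : ∀ a, f (f a) = a) (h3 : ∀ a ∈ S, f a ≠ a) (h1 : ∀ a ∈ S, f a ∈ S) :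
    Even S.card := by
  induction S using Finset.strongInduction with
  | _ S ih =>
    rcases S.eq_empty_or_nonempty with rfl | ⟨a, ha⟩
    · simp
    · have hfa := h1 a ha
      have hne := h3 a ha
      have hsub : ({a, f a} : Finset (Fin n)) ⊆ S := by
        intro z hz; simp at hz; rcases hz with rfl | rfl <;> assumption
      have hss : S \ {a, f a} ⊂ S :=
        Finset.sdiff_ssubset hsub ⟨a, by simp⟩
      have hcard : ({a, f a} : Finset (Fin n)).card = 2 := by
        rw [Finset.card_insert_of_notMem (by simpa using (Ne.symm hne)),
          Finset.card_singleton]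
      have h := ih _ hss (fun b hb => h3 b (Finset.mem_sdiff.1 hb).1)
        (fun b hb => by
          rw [Finset.mem_sdiff] at hb ⊢
          refine ⟨h1 b hb.1, ?_⟩
          simp only [Finset.mem_insert, Finset.mem_singleton] at hb ⊢
          push_neg at hb ⊢
          refine ⟨fun hc => hb.2.2 ?_, fun hc => hb.2.1 ?_⟩
          · rw [← hc, h2]
          · have := congrArg f hc; rwa [h2, h2] at this)
      have hcard2 : (S \ {a, f a}).card = S.card - 2 := by
        rw [Finset.card_sdiff_of_subset hsub, hcard]
      have h2le : 2 ≤ S.card := by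
        calc 2 = ({a, f a} : Finset (Fin n)).card := hcard.symm
        _ ≤ S.card := Finset.card_le_card hsub
      rw [hcard2] at h
      rcases h with ⟨k, hk⟩
      exact ⟨k + 1, by omega⟩

/-- For `r = (2,2,…,2)` of length `p ≥ 2`, the set
`{π ∈ NC₂(⟨2⟩_p) : π ∨ 1̂_r = 1̂_{2p}}` consists of exactly one element, the
non-crossing pairing `{{2p,1},{2,3},…,{2p-2,2p-1}}` (written 0-indexed below).
A pairing of `{1,…,2p}` is encoded as a fixed-point-free involution `m` of
`Fin (2p)`; non-crossing means there are no `a < b < m a < m b`;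
the block of `1̂_r` containing `x` is determined by `x / 2` (0-indexed);
the join condition `π ∨ 1̂_r = 1̂_{2p}` says the equivalence relation generated
by `π` together with `1̂_r` relates everything. -/
theorem nc2_join_top_unique_for_two (p : ℕ) (hp : 2 ≤ p) :
    {m : Fin (2 * p) → Fin (2 * p) |
        (∀ x, m (m x) = x) ∧ (∀ x, m x ≠ x) ∧
        (¬ ∃ a b : Fin (2 * p), a < b ∧ b < m a ∧ m a < m b) ∧
        (∀ x, ((m x : ℕ)) / 2 ≠ ((x : ℕ)) / 2) ∧
        (∀ x y : Fin (2 * p),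
          Relation.EqvGen (fun a b => m a = b ∨ ((a : ℕ)) / 2 = ((b : ℕ)) / 2) x y)} =
    {m | ∀ x : Fin (2 * p),
        ((m x : ℕ))
          = if (x : ℕ) = 0 then 2 * p - 1
            else if (x : ℕ) = 2 * p - 1 then 0
            else if Odd (x : ℕ) then (x : ℕ) + 1 else (x : ℕ) - 1} := by
  have h0lt : 0 < 2 * p := by omega
  have hp1 : 2 * p - 1 < 2 * p := by omega
  ext m
  simp only [Set.mem_setOf_eq]
  constructor
  · rintro ⟨hinv, hfix, hnc, hblk, hconn⟩
    set z0 : Fin (2 * p) := ⟨0, h0lt⟩ with hz0def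
    have hz0v : (z0 : ℕ) = 0 := rfl
    have hinj : ∀ a b : Fin (2 * p), m a = m b → a = b := by
      intro a b h
      have := congrArg m h
      rwa [hinv, hinv] at this
    -- invariance principle for the generated equivalence relation
    have hinvar : ∀ P : Fin (2 * p) → Prop,
        (∀ a b : Fin (2 * p), (m a = b ∨ (a : ℕ) / 2 = (b : ℕ) / 2) → (P a ↔ P b)) →
        ∀ a b : Fin (2 * p), P a → ¬ P b → False := by
      intro P hP a b hpa hpb
      have hiff : P a ↔ P b := by
        have h := hconn a b
        clear hpa hpb
        induction h with
        | rel x y hr => exact hP x y hr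
        | refl x => exact Iff.rfl
        | symm x y _ ih => exact ih.symm
        | trans x y z _ _ ih1 ih2 => exact ih1.trans ih2
      exact hpb (hiff.1 hpa)
    -- Step A : m 0 = 2p - 1
    have hA : (m z0 : ℕ) = 2 * p - 1 := by
      have hpos : 0 < (m z0 : ℕ) := by
        by_contra h
        exact hfix z0 (Fin.ext (by omega))
      have hlt := (m z0).isLt
      have claim1 : ∀ y : Fin (2 * p), (m z0 : ℕ) < (y : ℕ) → (m z0 : ℕ) < (m y : ℕ) := by
        intro y hy
        by_contra hle
        push_neg at hle
        have h1 : (m y : ℕ) ≠ (m z0 : ℕ) := by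
          intro h
          have h2 := congrArg Fin.val (hinj y z0 (Fin.ext h))
          omega
        have h2 : (m y : ℕ) ≠ 0 := by
          intro h
          have hyz : m y = z0 := Fin.ext (by omega)
          have h3 : y = m z0 := by rw [← hyz, hinv]
          have h4 := congrArg Fin.val h3
          omega
        refine hnc ⟨z0, m y, ?_, ?_, ?_⟩
        · rw [Fin.lt_def]; omega
        · rw [Fin.lt_def]; omega
        · rw [hinv, Fin.lt_def]; omega
      have claim1' : ∀ y : Fin (2 * p), 0 < (y : ℕ) → (y : ℕ) < (m z0 : ℕ) →
          0 < (m y : ℕ) ∧ (m y : ℕ) < (m z0 : ℕ) := by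
        intro y h0 hlt'
        have hne0 : (m y : ℕ) ≠ 0 := by
          intro h
          have hyz : m y = z0 := Fin.ext (by omega)
          have h3 : y = m z0 := by rw [← hyz, hinv]
          have h4 := congrArg Fin.val h3
          omega
        have hnet : (m y : ℕ) ≠ (m z0 : ℕ) := by
          intro h
          have h2 := congrArg Fin.val (hinj y z0 (Fin.ext h))
          omega
        have hnotgt : ¬ ((m z0 : ℕ) < (m y : ℕ)) := by
          intro h
          have h2 := claim1 (m y) h
          rw [hinv] at h2
          omega
        omega
      have hodd : (m z0 : ℕ) % 2 = 1 := by
        have hS : Even (Finset.Ioo z0 (m z0)).card := by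
          apply even_card_invol _ m hinv (fun a _ => hfix a)
          intro a ha
          simp only [Finset.mem_Ioo, Fin.lt_def] at ha ⊢
          have := claim1' a (by omega) (by omega)
          omega
        rw [Fin.card_Ioo, Nat.even_iff] at hS
        omega
      by_contra hne
      have hclosed : ∀ c : Fin (2 * p), (c : ℕ) ≤ (m z0 : ℕ) → (m c : ℕ) ≤ (m z0 : ℕ) := by
        intro c hc
        rcases Nat.eq_zero_or_pos (c : ℕ) with h | h
        · have hcz : c = z0 := Fin.ext (by omega)
          rw [hcz]
        · rcases eq_or_lt_of_le hc with h2 | h2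
          · have hcz : c = m z0 := Fin.ext h2
            rw [hcz, hinv]
            omega
          · exact le_of_lt (claim1' c h h2).2
      refine hinvar (fun z => (z : ℕ) ≤ (m z0 : ℕ)) ?_ z0 ⟨2 * p - 1, hp1⟩
        (by omega) ?_
      · intro a b hr
        rcases hr with hr | hr
        · constructor
          · intro h
            rw [← hr]
            exact hclosed a h
          · intro h
            have h2 := hclosed b h
            rw [← hr, hinv] at h2
            exact h2
        · have ha := a.isLt
          have hb := b.isLt
          constructor <;> intro h <;> omega
      · intro hcon
        have hcon2 : (2 * p - 1 : ℕ) ≤ (m z0 : ℕ) := hcon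
        omega
    have hlastval : (m ⟨2 * p - 1, hp1⟩ : ℕ) = 0 := by
      have h1 : m z0 = ⟨2 * p - 1, hp1⟩ := Fin.ext hA
      rw [← h1, hinv]
    -- Step B : m (2k+1) = 2k+2 for k < p-1
    have hB : ∀ k, k < p - 1 → ∀ hx : 2 * k + 1 < 2 * p,
        (m ⟨2 * k + 1, hx⟩ : ℕ) = 2 * k + 2 := by
      intro k
      induction k using Nat.strong_induction_on with
      | _ k IH =>
      intro hk hx
      have hknown : ∀ v (hv : v < 2 * p), 1 ≤ v → v ≤ 2 * k →
          (m ⟨v, hv⟩ : ℕ) = (if v % 2 = 1 then v + 1 else v - 1) := by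
        intro v hv h1 h2
        rcases Nat.even_or_odd v with he | ho
        · rw [Nat.even_iff] at he
          rw [if_neg (by omega)]
          have hjk : (v - 2) / 2 < k := by omega
          have hj1 : 2 * ((v - 2) / 2) + 1 < 2 * p := by omega
          have hodd' := IH ((v - 2) / 2) hjk (by omega) hj1
          have heq : m ⟨2 * ((v - 2) / 2) + 1, hj1⟩ = ⟨v, hv⟩ := by
            apply Fin.ext
            have hrfl : ((⟨v, hv⟩ : Fin (2 * p)) : ℕ) = v := rfl
            omega
          have hvv := hinv (⟨2 * ((v - 2) / 2) + 1, hj1⟩ : Fin (2 * p))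
          rw [heq] at hvv
          rw [hvv]
          exact (by omega : 2 * ((v - 2) / 2) + 1 = v - 1)
        · rw [Nat.odd_iff] at ho
          rw [if_pos ho]
          have hjk : v / 2 < k := by omega
          have hj1 : 2 * (v / 2) + 1 < 2 * p := by omega
          have h := IH (v / 2) hjk (by omega) hj1
          have heq2 : (⟨2 * (v / 2) + 1, hj1⟩ : Fin (2 * p)) = ⟨v, hv⟩ :=
            Fin.ext (show 2 * (v / 2) + 1 = v by omega)
          rw [heq2] at h
          rw [h]
          omega
      set x : Fin (2 * p) := ⟨2 * k + 1, hx⟩ with hxdef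
      have hxval : (x : ℕ) = 2 * k + 1 := rfl
      have hslt : (m x : ℕ) < 2 * p := (m x).isLt
      have hsne : (m x : ℕ) ≠ 2 * p - 1 := by
        intro h
        have hmm : m x = m z0 := Fin.ext (by omega)
        have h2 := congrArg Fin.val (hinj x z0 hmm)
        omega
      have hs_lb : 2 * k + 1 < (m x : ℕ) := by
        by_contra hcon
        push_neg at hcon
        have hne_x : (m x : ℕ) ≠ 2 * k + 1 := by
          intro h
          exact hfix x (Fin.ext (by omega))
        have hne0 : (m x : ℕ) ≠ 0 := by
          intro h
          have hx0 : m x = z0 := Fin.ext (by omega)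
          have h3 : x = m z0 := by rw [← hx0, hinv]
          have h2 := congrArg Fin.val h3
          omega
        have hkn := hknown (m x : ℕ) (by omega) (by omega) (by omega)
        have hmm : (⟨(m x : ℕ), by omega⟩ : Fin (2 * p)) = m x := Fin.ext rfl
        rw [hmm, hinv] at hkn
        split_ifs at hkn <;> omega
      have hI : ∀ y : Fin (2 * p), 2 * k + 1 < (y : ℕ) → (y : ℕ) < (m x : ℕ) →
          2 * k + 1 < (m y : ℕ) ∧ (m y : ℕ) < (m x : ℕ) := by
        intro y h1 h2
        have hne_s : (m y : ℕ) ≠ (m x : ℕ) := by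
          intro h
          have h3 := congrArg Fin.val (hinj y x (Fin.ext h))
          omega
        have hnotgt : ¬ ((m x : ℕ) < (m y : ℕ)) := by
          intro h
          refine hnc ⟨x, y, ?_, ?_, ?_⟩ <;> rw [Fin.lt_def] <;> omega
        have hne0' : (m y : ℕ) ≠ 0 := by
          intro h
          have hyz : m y = z0 := Fin.ext (by omega)
          have h3 : y = m z0 := by rw [← hyz, hinv]
          have h4 := congrArg Fin.val h3
          omega
        have hne_low : ¬ ((m y : ℕ) ≤ 2 * k) := by
          intro h
          rcases Nat.eq_zero_or_pos (m y : ℕ) with h0 | h0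
          · exact hne0' h0
          · have hkn := hknown (m y : ℕ) (by omega) h0 h
            have hmm : (⟨(m y : ℕ), by omega⟩ : Fin (2 * p)) = m y := Fin.ext rfl
            rw [hmm, hinv] at hkn
            split_ifs at hkn <;> omega
        have hne_x2 : (m y : ℕ) ≠ 2 * k + 1 := by
          intro h
          have hmyx : m y = x := Fin.ext (by omega)
          have h4 : y = m x := by rw [← hmyx, hinv]
          have h5 := congrArg Fin.val h4
          omega
        omega
      have hs_even : (m x : ℕ) % 2 = 0 := by
        have hS : Even (Finset.Ioo x (m x)).card := by
          apply even_card_invol _ m hinv (fun a _ => hfix a)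
          intro a ha
          simp only [Finset.mem_Ioo, Fin.lt_def] at ha ⊢
          have := hI a (by omega) (by omega)
          omega
        rw [Fin.card_Ioo, Nat.even_iff] at hS
        omega
      by_contra hne
      have hge : 2 * k + 4 ≤ (m x : ℕ) := by omega
      have h2k2 : 2 * k + 2 < 2 * p := by omega
      refine hinvar (fun z => 2 * k + 1 < (z : ℕ) ∧ (z : ℕ) < (m x : ℕ)) ?_
        ⟨2 * k + 2, h2k2⟩ z0 ?_ ?_
      · intro a b hr
        rcases hr with hr | hr
        · constructor
          · intro h
            have h2 := hI a h.1 h.2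
            rwa [hr] at h2
          · intro h
            have h2 := hI b h.1 h.2
            rwa [← hr, hinv] at h2
        · have ha := a.isLt
          have hb := b.isLt
          constructor <;> intro h <;>
            refine ⟨by omega, by omega⟩
      · exact (show 2 * k + 1 < 2 * k + 2 ∧ 2 * k + 2 < (m x : ℕ) by omega)
      · intro h
        have h1 := h.1
        omega
    -- assembly
    intro x
    have hxlt := x.isLt
    by_cases h0 : (x : ℕ) = 0
    · rw [if_pos h0]
      have hxz : x = z0 := Fin.ext (by omega)
      rw [hxz, hA]
    · rw [if_neg h0]
      by_cases h1 : (x : ℕ) = 2 * p - 1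
      · rw [if_pos h1]
        have hxz : x = ⟨2 * p - 1, hp1⟩ := Fin.ext h1
        rw [hxz, hlastval]
      · rw [if_neg h1]
        by_cases h2 : Odd (x : ℕ)
        · rw [if_pos h2]
          rw [Nat.odd_iff] at h2
          have hlt' : 2 * ((x : ℕ) / 2) + 1 < 2 * p := by omega
          have hb := hB ((x : ℕ) / 2) (by omega) hlt'
          have hxe : (⟨2 * ((x : ℕ) / 2) + 1, hlt'⟩ : Fin (2 * p)) = x :=
            Fin.ext (show 2 * ((x : ℕ) / 2) + 1 = (x : ℕ) by omega)
          rw [hxe] at hb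
          omega
        · rw [if_neg h2]
          rw [Nat.odd_iff] at h2
          have hlt' : 2 * (((x : ℕ) - 2) / 2) + 1 < 2 * p := by omega
          have hb := hB (((x : ℕ) - 2) / 2) (by omega) hlt'
          have hxe : m (⟨2 * (((x : ℕ) - 2) / 2) + 1, hlt'⟩ : Fin (2 * p)) = x := by
            apply Fin.ext
            have hrfl : ((x : ℕ)) = Fin.val x := rfl
            omega
          have h3 := congrArg m hxe
          rw [hinv] at h3
          rw [← h3]
          exact (by omega : 2 * (((x : ℕ) - 2) / 2) + 1 = (x : ℕ) - 1)
  · intro hm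
    have hmv : ∀ x : Fin (2 * p), (m x : ℕ) =
        if (x : ℕ) = 0 then 2 * p - 1
        else if (x : ℕ) = 2 * p - 1 then 0
        else if (x : ℕ) % 2 = 1 then (x : ℕ) + 1 else (x : ℕ) - 1 := by
      intro x
      rw [hm x]
      simp only [Nat.odd_iff]
    refine ⟨?_, ?_, ?_, ?_, ?_⟩
    · intro x
      apply Fin.ext
      have h1 := hmv x
      have h2 := hmv (m x)
      have hx := x.isLt
      have hmx := (m x).isLt
      split_ifs at h1 h2 <;> omega
    · intro x h
      have h1 := hmv x
      have hx := x.isLt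
      rw [h] at h1
      split_ifs at h1 <;> omega
    · rintro ⟨a, b, h1, h2, h3⟩
      rw [Fin.lt_def] at h1 h2 h3
      have ha := a.isLt
      have hb := b.isLt
      rw [hmv a] at h2 h3
      rw [hmv b] at h3
      split_ifs at h2 h3 <;> omega
    · intro x
      have hx := x.isLt
      rw [hmv x]
      split_ifs <;> omega
    · have key : ∀ v (hv : v < 2 * p),
          Relation.EqvGen (fun a b : Fin (2 * p) => m a = b ∨ (a : ℕ) / 2 = (b : ℕ) / 2)
            ⟨v, hv⟩ ⟨0, h0lt⟩ := by
        intro v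
        induction v with
        | zero => intro hv; exact Relation.EqvGen.refl _
        | succ w ih =>
          intro hv
          have hw : w < 2 * p := by omega
          refine Relation.EqvGen.trans _ _ _ (Relation.EqvGen.rel _ _ ?_) (ih hw)
          by_cases hpar : (w + 1) % 2 = 1
          · right
            show (w + 1) / 2 = w / 2
            omega
          · left
            apply Fin.ext
            rw [hmv ⟨w + 1, hv⟩]
            show (if w + 1 = 0 then 2 * p - 1
              else if w + 1 = 2 * p - 1 then 0
              else if (w + 1) % 2 = 1 then (w + 1) + 1 else (w + 1) - 1) = w
            split_ifs <;> (try contradiction) <;> omega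
      intro a b
      have ha := key a.1 a.2
      have hb := key b.1 b.2
      rw [Fin.eta] at ha hb
      exact Relation.EqvGen.trans _ _ _ ha (Relation.EqvGen.symm _ _ hb)
end

section
/- For any integer vector r = (r₁, ..., r_p) of positive integers, there is a bijection between NC₂(r), the set of non-crossing pairings of {1,...,|r|} pairing no two elements within the same block of 1̂_r, and the set Γ(r) of Dyck r-paths, i.e., functions γ: {0,1,...,p} → ℤ with γ(0) = γ(p) = 0, γ(i) + γ(i−1) ≥ rᵢ and γ(i) − γ(i−1) ∈ {rᵢ, rᵢ−2, ..., −rᵢ} for all 1 ≤ i ≤ p. -/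
/-!
Reading the smaller element of each pair as an up-step and the larger one as a down-step
identifies non-crossing pairings of `{0, …, N-1}` with Dyck words of length `N`; conversely
the partner of a step is the nearest step crossing the same edge of the walk. An up-step
before a down-step in the same block would give crossing arcs, so a non-crossing pairing
avoids the blocks of `1̂_r` exactly when on each block `k` its `s_k` down-steps precede its
`t_k = r_k - s_k` up-steps. Such a word is determined by the heights `γ(k)` at the block
boundaries, through `γ(k+1) - γ(k) = t_k - s_k`, and it stays nonnegative exactly when
`s_k ≤ γ(k)`, i.e. `r_k ≤ γ(k) + γ(k+1)`.
-/

open Finset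

namespace NCPairing

def height (w : ℕ → Bool) : ℕ → ℤ
  | 0 => 0
  | n + 1 => height w n + if w n then 1 else -1

/-- The level of the edge crossed by step `x`: the lower of the heights before and after it. -/
def level (w : ℕ → Bool) (x : ℕ) : ℤ := if w x then height w x else height w x - 1

section Word

variable {w : ℕ → Bool}

theorem height_succ_of_true {n : ℕ} (h : w n = true) : height w (n + 1) = height w n + 1 := by
  simp [height, h]

theorem height_succ_of_false {n : ℕ} (h : w n = false) : height w (n + 1) = height w n - 1 := by
  simp [height, h, sub_eq_add_neg]

theorem level_of_true {n : ℕ} (h : w n = true) : level w n = height w n := by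
  simp [level, h]

theorem level_of_false {n : ℕ} (h : w n = false) : level w n = height w (n + 1) := by
  simp [level, h, height_succ_of_false h]

theorem height_sub_height {a b : ℕ} (hab : a ≤ b) :
    height w b - height w a =
      (#{z ∈ Ico a b | w z = true} : ℤ) - #{z ∈ Ico a b | w z = false} := by
  induction b, hab using Nat.le_induction with
  | base => simp
  | succ b hab ih =>
    rw [Nat.Ico_succ_right_eq_insert_Ico hab, filter_insert, filter_insert]
    cases hw : w b <;> simp [height_succ_of_true, height_succ_of_false, hw] <;> omega

theorem lt_height_of_level_ne {d : ℤ} {u v : ℕ} (huv : u ≤ v) (hu : d < height w u)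
    (hne : ∀ z, u ≤ z → z < v → level w z ≠ d) : d < height w v := by
  induction v, huv using Nat.le_induction with
  | base => exact hu
  | succ n hn ih =>
    have := ih fun z hz hz' => hne z hz (by omega)
    cases hw : w n
    · have := hne n hn (by omega)
      rw [level_of_false hw] at this
      rw [height_succ_of_false hw] at this ⊢
      omega
    · rw [height_succ_of_true hw]; omega

theorem height_le_of_level_ne {d : ℤ} {u v : ℕ} (huv : u ≤ v) (hu : height w u ≤ d)
    (hne : ∀ z, u ≤ z → z < v → level w z ≠ d) : height w v ≤ d := by
  induction v, huv using Nat.le_induction with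
  | base => exact hu
  | succ n hn ih =>
    have := ih fun z hz hz' => hne z hz (by omega)
    cases hw : w n
    · rw [height_succ_of_false hw]; omega
    · have := hne n hn (by omega)
      rw [level_of_true hw] at this
      rw [height_succ_of_true hw]; omega

noncomputable def partner (w : ℕ → Bool) (x : ℕ) : ℕ :=
  if w x then sInf {y | x < y ∧ level w y = level w x}
  else sSup {y | y < x ∧ level w y = level w x}

structure IsArc (w : ℕ → Bool) (a b : ℕ) : Prop where
  lt : a < b
  up : w a = true
  down : w b = false
  level_eq : level w b = level w a
  level_ne : ∀ z, a < z → z < b → level w z ≠ level w a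

theorem IsArc.partner_left {a b : ℕ} (h : IsArc w a b) : partner w a = b := by
  rw [partner, if_pos h.up]
  refine IsLeast.csInf_eq ⟨⟨h.lt, h.level_eq⟩, fun y hy => ?_⟩
  by_contra! hyb
  exact h.level_ne y hy.1 hyb hy.2

theorem IsArc.partner_right {a b : ℕ} (h : IsArc w a b) : partner w b = a := by
  rw [partner, if_neg (by simp [h.down])]
  refine IsGreatest.csSup_eq ⟨⟨h.lt, h.level_eq.symm⟩, fun y hy => ?_⟩
  by_contra! hya
  exact h.level_ne y hya hy.1 (hy.2.trans h.level_eq)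

/-- A later step at level `d` exists since the walk returns to `0 ≤ d`; the first one is a
down-step because the walk stays above `d` until then. -/
theorem isArc_partner_of_true {N x : ℕ} (hN : height w N = 0) (hx : x < N) (hwx : w x = true)
    (hlev : 0 ≤ level w x) : IsArc w x (partner w x) ∧ partner w x < N := by
  set d := level w x
  have hx1 : height w (x + 1) = d + 1 := by rw [height_succ_of_true hwx, ← level_of_true hwx]
  have hS : ∃ y, x < y ∧ level w y = d ∧ y < N := by
    by_contra! hS
    have := lt_height_of_level_ne (d := d) (show x + 1 ≤ N by omega) (by omega)
      fun z hz hzN h => absurd (hS z (by omega) h) (by omega)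
    omega
  obtain ⟨z, hxz, hz, hzN⟩ := hS
  have hmem : partner w x ∈ {y | x < y ∧ level w y = d} := by
    rw [partner, if_pos hwx]; exact Nat.sInf_mem ⟨z, hxz, hz⟩
  have hle : partner w x ≤ z := by rw [partner, if_pos hwx]; exact Nat.sInf_le ⟨hxz, hz⟩
  have hmin : ∀ y, x < y → y < partner w x → level w y ≠ d := fun y hxy hy hyd => by
    rw [partner, if_pos hwx] at hy; exact (Nat.notMem_of_lt_sInf hy) ⟨hxy, hyd⟩
  refine ⟨⟨hmem.1, hwx, ?_, hmem.2, hmin⟩, by omega⟩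
  by_contra hup
  have := lt_height_of_level_ne (d := d) (show x + 1 ≤ partner w x from hmem.1) (by omega)
    fun y hy => hmin y (by omega)
  rw [← level_of_true (Bool.not_eq_false _ ▸ hup), hmem.2] at this
  omega

theorem isArc_partner_of_false {x : ℕ} (hwx : w x = false) (hlev : 0 ≤ level w x) :
    IsArc w (partner w x) x := by
  set d := level w x
  have hx : height w x = d + 1 := by
    have := height_succ_of_false hwx; rw [← level_of_false hwx] at this; omega
  have hS : ∃ y, y < x ∧ level w y = d := by
    by_contra! hS
    have := height_le_of_level_ne (d := d) (Nat.zero_le x) (by simp [height]; omega)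
      fun z _ hz => hS z hz
    omega
  have hbdd : BddAbove {y | y < x ∧ level w y = d} := ⟨x, fun y hy => hy.1.le⟩
  have hmem : partner w x ∈ {y | y < x ∧ level w y = d} := by
    rw [partner, if_neg (by simp [hwx])]; exact Nat.sSup_mem hS hbdd
  have hmax : ∀ y, partner w x < y → y < x → level w y ≠ d := fun y hy hyx hyd => by
    rw [partner, if_neg (by simp [hwx])] at hy
    exact (le_csSup hbdd ⟨hyx, hyd⟩).not_gt hy
  refine ⟨hmem.1, ?_, hwx, hmem.2.symm, fun y h1 h2 => hmem.2 ▸ hmax y h1 h2⟩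
  by_contra hdown
  have := height_le_of_level_ne (d := d) (show partner w x + 1 ≤ x from hmem.1)
    (by rw [← level_of_false (Bool.not_eq_true _ ▸ hdown), hmem.2])
    fun y hy => hmax y (by omega)
  omega

end Word

structure IsDyck (w : ℕ → Bool) (N : ℕ) : Prop where
  height_eq_zero : height w N = 0
  height_nonneg : ∀ y ≤ N, 0 ≤ height w y

/-- A non-crossing pairing of `{0, …, N-1}` as an involution; its values beyond `N` play
no role. -/
structure IsNCPairing (N : ℕ) (m : ℕ → ℕ) : Prop where
  lt : ∀ x < N, m x < N
  invol : ∀ x < N, m (m x) = x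
  ne : ∀ x < N, m x ≠ x
  noncrossing : ∀ a b, b < N → a < b → b < m a → m a < m b → False

namespace IsDyck

variable {w : ℕ → Bool} {N x : ℕ} (hw : IsDyck w N)
include hw

theorem level_nonneg (hx : x < N) : 0 ≤ level w x := by
  cases h : w x
  · rw [level_of_false h]; exact hw.height_nonneg _ hx
  · rw [level_of_true h]; exact hw.height_nonneg _ hx.le

theorem isArc_partner (hx : x < N) :
    (w x = true ∧ IsArc w x (partner w x)) ∨ (w x = false ∧ IsArc w (partner w x) x) := by
  cases h : w x
  · exact .inr ⟨rfl, isArc_partner_of_false h (hw.level_nonneg hx)⟩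
  · exact .inl ⟨rfl, (isArc_partner_of_true hw.height_eq_zero hx h (hw.level_nonneg hx)).1⟩

theorem partner_lt (hx : x < N) : partner w x < N := by
  rcases hw.isArc_partner hx with ⟨h, -⟩ | ⟨-, h⟩
  · exact (isArc_partner_of_true hw.height_eq_zero hx h (hw.level_nonneg hx)).2
  · exact h.lt.trans hx

theorem lt_partner_iff (hx : x < N) : x < partner w x ↔ w x = true := by
  rcases hw.isArc_partner hx with ⟨h, ha⟩ | ⟨h, ha⟩
  · simp [h, ha.lt]
  · simp [h, ha.lt.le]

/-- For crossing arcs `a < b < partner a < partner b` the walk would stay above the level of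
`b`, hence of `a`, on `(b, partner b]`, which contains `partner a + 1`, where it is back at the
level of `a`. -/
theorem isNCPairing_partner : IsNCPairing N (partner w) where
  lt _ := hw.partner_lt
  invol x hx := by
    rcases hw.isArc_partner hx with ⟨-, h⟩ | ⟨-, h⟩
    · exact h.partner_right
    · exact h.partner_left
  ne x hx := by
    rcases hw.isArc_partner hx with ⟨-, h⟩ | ⟨-, h⟩ <;> have := h.lt <;> omega
  noncrossing a b hb hab hba hab' := by
    have ha : a < N := hab.trans hb
    obtain ⟨-, arcA⟩ | ⟨hwa, -⟩ := hw.isArc_partner ha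
    swap; · exact absurd ((hw.lt_partner_iff ha).mp (by omega)) (by simp [hwa])
    obtain ⟨-, arcB⟩ | ⟨hwb, -⟩ := hw.isArc_partner hb
    swap; · exact absurd ((hw.lt_partner_iff hb).mp (by omega)) (by simp [hwb])
    have above : ∀ c z, IsArc w c (partner w c) → c < z → z ≤ partner w c →
        level w c < height w z := fun c z arc hcz hz =>
      lt_height_of_level_ne (show c + 1 ≤ z by omega)
        (by rw [height_succ_of_true arc.up, level_of_true arc.up]; omega)
        fun y hy hyz => arc.level_ne y (by omega) (by omega)
    have h1 : level w a < level w b := by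
      rw [level_of_true arcB.up]; exact above a b arcA hab hba.le
    have h2 := above b (partner w a + 1) arcB (by omega) (by omega)
    have h3 := arcA.level_eq
    rw [level_of_false arcA.down] at h3
    omega

end IsDyck

def upWord (N : ℕ) (m : ℕ → ℕ) (x : ℕ) : Bool := decide (x < N ∧ x < m x)

theorem upWord_eq_true_iff {N x : ℕ} {m : ℕ → ℕ} (hx : x < N) :
    upWord N m x = true ↔ x < m x := by
  simp [upWord, hx]

namespace IsNCPairing

variable {N : ℕ} {m : ℕ → ℕ} (hm : IsNCPairing N m)
include hm

theorem upWord_eq_false_iff {x : ℕ} (hx : x < N) : upWord N m x = false ↔ m x < x := by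
  have := hm.ne x hx
  simp only [upWord, hx, true_and, decide_eq_false_iff_not, not_lt]
  omega

theorem apply_mem_Ioo {a c : ℕ} (ha : a < N) (hc : c ∈ Ioo a (m a)) : m c ∈ Ioo a (m a) := by
  rw [mem_Ioo] at hc ⊢
  have hcN : c < N := hc.2.trans (hm.lt a ha)
  have hmc := hm.invol c hcN
  have hma := hm.invol a ha
  constructor
  · by_contra! h
    have : m c ≠ a := fun h' => by rw [h'] at hmc; omega
    exact hm.noncrossing (m c) a ha (by omega) (by omega) (by omega)
  · by_contra! h
    have : m c ≠ m a := fun h' => by rw [h', hma] at hmc; omega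
    exact hm.noncrossing a c hcN hc.1 hc.2 (by omega)

theorem injOn : Set.InjOn m (Set.Iio N) := fun x hx y hy hxy => by
  rw [← hm.invol x hx, hxy, hm.invol y hy]

theorem card_down_le_card_up {u v : ℕ} (hv : v ≤ N)
    (h : ∀ c ∈ Ico u v, m c < c → u ≤ m c) :
    #{c ∈ Ico u v | m c < c} ≤ #{c ∈ Ico u v | c < m c} := by
  refine card_le_card_of_injOn m (fun c hc => ?_) (hm.injOn.mono fun c hc => ?_)
  · simp only [coe_filter, mem_Ico, Set.mem_ofPred_eq] at hc ⊢
    have := hm.invol c (by omega)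
    have := h c (mem_Ico.mpr hc.1) hc.2
    omega
  · simp only [coe_filter, mem_Ico, Set.mem_ofPred_eq, Set.mem_Iio] at hc ⊢
    omega

theorem card_up_le_card_down {u v : ℕ} (hv : v ≤ N)
    (h : ∀ c ∈ Ico u v, c < m c → m c < v) :
    #{c ∈ Ico u v | c < m c} ≤ #{c ∈ Ico u v | m c < c} := by
  refine card_le_card_of_injOn m (fun c hc => ?_) (hm.injOn.mono fun c hc => ?_)
  · simp only [coe_filter, mem_Ico, Set.mem_ofPred_eq] at hc ⊢
    have := hm.invol c (by omega)
    have := h c (mem_Ico.mpr hc.1) hc.2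
    omega
  · simp only [coe_filter, mem_Ico, Set.mem_ofPred_eq, Set.mem_Iio] at hc ⊢
    omega

theorem height_upWord_sub {a b : ℕ} (hab : a ≤ b) (hb : b ≤ N) :
    height (upWord N m) b - height (upWord N m) a =
      (#{c ∈ Ico a b | c < m c} : ℤ) - #{c ∈ Ico a b | m c < c} := by
  rw [height_sub_height hab]
  congr 3 <;> refine filter_congr fun c hc => ?_ <;> have : c < N := by simp at hc; omega
  · exact upWord_eq_true_iff this
  · exact hm.upWord_eq_false_iff this

theorem isDyck_upWord : IsDyck (upWord N m) N where
  height_eq_zero := by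
    have h := hm.height_upWord_sub (Nat.zero_le N) le_rfl
    have := hm.card_down_le_card_up (u := 0) le_rfl fun _ _ _ => Nat.zero_le _
    have := hm.card_up_le_card_down (u := 0) le_rfl fun c hc _ => hm.lt c (mem_Ico.mp hc).2
    simp only [height] at h
    omega
  height_nonneg y hy := by
    have h := hm.height_upWord_sub (Nat.zero_le y) hy
    have := hm.card_down_le_card_up (u := 0) hy fun _ _ _ => Nat.zero_le _
    simp only [height] at h
    omega

/-- Inside an arc `(a, m a)` every step is matched within the arc, so the walk stays strictly
above the level of `a` there and returns to it exactly at `m a`. -/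
theorem isArc_upWord {a : ℕ} (ha : a < N) (hup : a < m a) : IsArc (upWord N m) a (m a) := by
  have hmaN := hm.lt a ha
  have hwa : upWord N m a = true := (upWord_eq_true_iff ha).mpr hup
  have hwb : upWord N m (m a) = false :=
    (hm.upWord_eq_false_iff hmaN).mpr (by rw [hm.invol a ha]; omega)
  have inside : ∀ c ∈ Ico (a + 1) (m a), m c ∈ Ioo a (m a) := fun c hc =>
    hm.apply_mem_Ioo ha (by simp only [mem_Ico, Finset.mem_Ioo] at hc ⊢; omega)
  have above : ∀ z, a + 1 ≤ z → z ≤ m a →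
      height (upWord N m) a + 1 ≤ height (upWord N m) z := fun z hz1 hz2 => by
    have := hm.height_upWord_sub hz1 (by omega)
    have := hm.card_down_le_card_up (u := a + 1) (v := z) (by omega) fun c hc _ =>
      (Finset.mem_Ioo.mp (inside c (by simp only [mem_Ico] at hc ⊢; omega))).1
    have := height_succ_of_true hwa
    omega
  have back : height (upWord N m) (m a) = height (upWord N m) a + 1 := by
    have := hm.height_upWord_sub (show a + 1 ≤ m a by omega) hmaN.le
    have := hm.card_down_le_card_up (u := a + 1) hmaN.le fun c hc _ =>
      (Finset.mem_Ioo.mp (inside c hc)).1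
    have := hm.card_up_le_card_down (u := a + 1) hmaN.le fun c hc _ =>
      (Finset.mem_Ioo.mp (inside c hc)).2
    have := height_succ_of_true hwa
    omega
  refine ⟨hup, hwa, hwb, ?_, fun z hz1 hz2 => ?_⟩
  · rw [level_of_false hwb, level_of_true hwa, height_succ_of_false hwb, back]; ring
  · have h1 := above z (by omega) (by omega)
    have h2 := above (z + 1) (by omega) (by omega)
    rw [level_of_true hwa]
    cases hwz : upWord N m z
    · rw [level_of_false hwz]; omega
    · rw [level_of_true hwz]; omega

theorem partner_upWord {x : ℕ} (hx : x < N) : partner (upWord N m) x = m x := by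
  rcases lt_or_gt_of_ne (hm.ne x hx).symm with h | h
  · exact (hm.isArc_upWord hx h).partner_left
  · have arc := hm.isArc_upWord (hm.lt x hx) (by rwa [hm.invol x hx])
    rw [hm.invol x hx] at arc
    exact arc.partner_right

end IsNCPairing

def blockStart (r : ℕ → ℕ) (k : ℕ) : ℕ := ∑ i ∈ range k, r i

def block (r : ℕ → ℕ) (k : ℕ) : Finset ℕ := Ico (blockStart r k) (blockStart r (k + 1))

section Blocks

variable {r : ℕ → ℕ} {p k x : ℕ}

theorem blockStart_succ (r : ℕ → ℕ) (k : ℕ) : blockStart r (k + 1) = blockStart r k + r k :=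
  sum_range_succ r k

theorem blockStart_mono (r : ℕ → ℕ) : Monotone (blockStart r) := fun _ _ h =>
  sum_le_sum_of_subset (range_subset_range.mpr h)

theorem mem_block_iff : x ∈ block r k ↔ blockStart r k ≤ x ∧ x < blockStart r k + r k := by
  rw [block, mem_Ico, blockStart_succ]

theorem card_block (r : ℕ → ℕ) (k : ℕ) : #(block r k) = r k := by
  rw [block, Nat.card_Ico, blockStart_succ, Nat.add_sub_cancel_left]

theorem eq_of_mem_block {l : ℕ} (hk : x ∈ block r k) (hl : x ∈ block r l) : k = l := by
  rw [block, mem_Ico] at hk hl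
  by_contra! h
  rcases h.lt_or_gt with h | h
  · have := blockStart_mono r (show k + 1 ≤ l by omega); omega
  · have := blockStart_mono r (show l + 1 ≤ k by omega); omega

theorem exists_mem_block (hx : x < blockStart r p) : ∃ k < p, x ∈ block r k := by
  induction p with
  | zero => simp [blockStart] at hx
  | succ p ih =>
    by_cases h : x < blockStart r p
    · obtain ⟨k, hk, hxk⟩ := ih h
      exact ⟨k, by omega, hxk⟩
    · exact ⟨p, by omega, mem_Ico.mpr ⟨by omega, hx⟩⟩

theorem lt_blockStart_of_mem_block (hk : k < p) (hx : x ∈ block r k) : x < blockStart r p :=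
  (mem_Ico.mp hx).2.trans_le (blockStart_mono r hk)

end Blocks

/-- The word with `s k` down-steps followed by `r k - s k` up-steps on each block `k < p`. -/
def pathWord (r : ℕ → ℕ) (p : ℕ) (s : ℕ → ℕ) (x : ℕ) : Bool :=
  decide (∃ k < p, x ∈ block r k ∧ blockStart r k + s k ≤ x)

section PathWord

variable {r s : ℕ → ℕ} {p : ℕ}

theorem pathWord_of_mem_block {k x : ℕ} (hk : k < p) (hx : x ∈ block r k) :
    pathWord r p s x = decide (blockStart r k + s k ≤ x) := by
  refine decide_eq_decide.mpr ⟨fun ⟨l, _, hl, h⟩ => ?_, fun h => ⟨k, hk, hx, h⟩⟩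
  rwa [eq_of_mem_block hx hl]

theorem pathWord_congr {s' : ℕ → ℕ} (h : ∀ k < p, s k = s' k) :
    pathWord r p s = pathWord r p s' := by
  funext x
  exact decide_eq_decide.mpr ⟨fun ⟨k, hk, hx, hs⟩ => ⟨k, hk, hx, h k hk ▸ hs⟩,
    fun ⟨k, hk, hx, hs⟩ => ⟨k, hk, hx, (h k hk).symm ▸ hs⟩⟩

theorem pathWord_of_le {x : ℕ} (hx : blockStart r p ≤ x) : pathWord r p s x = false :=
  decide_eq_false fun ⟨_, hk, hxk, _⟩ => (lt_blockStart_of_mem_block hk hxk).not_ge hx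

theorem height_pathWord_add {k u : ℕ} (hk : k < p) (hu : u ≤ r k) :
    height (pathWord r p s) (blockStart r k + u) =
      height (pathWord r p s) (blockStart r k) + u - 2 * min u (s k) := by
  induction u with
  | zero => simp
  | succ u ih =>
    have hx := pathWord_of_mem_block (s := s) hk
      ((mem_block_iff (r := r)).mpr ⟨Nat.le_add_right _ u, by omega⟩)
    rw [← add_assoc, height, ih (by omega), hx]
    simp only [Nat.add_le_add_iff_left, decide_eq_true_eq]
    split_ifs <;> omega

theorem height_pathWord_blockStart_succ {k : ℕ} (hk : k < p) (hs : s k ≤ r k) :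
    height (pathWord r p s) (blockStart r (k + 1)) =
      height (pathWord r p s) (blockStart r k) + r k - 2 * s k := by
  rw [blockStart_succ, height_pathWord_add hk le_rfl, min_eq_right hs]

/-- Within a block all down-steps precede all up-steps, so no arc has both ends in a block. -/
theorem partner_pathWord_notMem_block (hw : IsDyck (pathWord r p s) (blockStart r p))
    {k x : ℕ} (hk : k < p) (hx : x ∈ block r k) : partner (pathWord r p s) x ∉ block r k := by
  intro hy
  have hwx := pathWord_of_mem_block (s := s) hk hx
  have hwy := pathWord_of_mem_block (s := s) hk hy
  rcases hw.isArc_partner (lt_blockStart_of_mem_block hk hx) with ⟨h, arc⟩ | ⟨h, arc⟩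
  · rw [h] at hwx
    rw [arc.down] at hwy
    simp only [true_eq_decide_iff, false_eq_decide_iff, not_le] at hwx hwy
    have := arc.lt; omega
  · rw [h] at hwx
    rw [arc.up] at hwy
    simp only [true_eq_decide_iff, false_eq_decide_iff, not_le] at hwx hwy
    have := arc.lt; omega

end PathWord

/-- `g` is the height profile at the block boundaries of the walk taking `s k` down-steps,
then `r k - s k` up-steps on block `k`, and this profile is a Dyck `r`-path. -/
structure IsDyckProfile (r : ℕ → ℕ) (p : ℕ) (s : ℕ → ℕ) (g : ℕ → ℤ) : Prop where
  zero : g 0 = 0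
  last : g p = 0
  le : ∀ k < p, s k ≤ r k
  succ : ∀ k < p, g (k + 1) = g k + r k - 2 * s k
  le_height : ∀ k < p, s k ≤ g k

namespace IsDyckProfile

variable {r s : ℕ → ℕ} {p : ℕ} {g : ℕ → ℤ} (hg : IsDyckProfile r p s g)
include hg

theorem height_pathWord_blockStart {k : ℕ} (hk : k ≤ p) :
    height (pathWord r p s) (blockStart r k) = g k := by
  induction k with
  | zero => simp [blockStart, height, hg.zero]
  | succ k ih =>
    rw [height_pathWord_blockStart_succ (by omega) (hg.le k (by omega)), ih (by omega),
      hg.succ k (by omega)]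

/-- On block `k` the walk descends from `g k` to its minimum `g k - s k ≥ 0`, then climbs. -/
theorem isDyck_pathWord : IsDyck (pathWord r p s) (blockStart r p) where
  height_eq_zero := by rw [hg.height_pathWord_blockStart le_rfl, hg.last]
  height_nonneg y hy := by
    rcases hy.lt_or_eq with hy | rfl
    · obtain ⟨k, hk, hyk⟩ := exists_mem_block hy
      obtain ⟨u, rfl⟩ := Nat.exists_eq_add_of_le (mem_block_iff.mp hyk).1
      rw [height_pathWord_add hk (by have := (mem_block_iff.mp hyk).2; omega),
        hg.height_pathWord_blockStart hk.le]
      have := hg.le_height k hk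
      push_cast
      omega
    · rw [hg.height_pathWord_blockStart le_rfl, hg.last]

end IsDyckProfile

def numClosers (r m : ℕ → ℕ) (k : ℕ) : ℕ := #{x ∈ block r k | m x < x}

theorem numClosers_le (r m : ℕ → ℕ) (k : ℕ) : numClosers r m k ≤ r k :=
  (card_filter_le _ _).trans_eq (card_block r k)

namespace IsNCPairing

variable {N p : ℕ} {r m : ℕ → ℕ} (hm : IsNCPairing N m) (hN : blockStart r p = N)
  (hsep : ∀ k < p, ∀ x ∈ block r k, m x ∉ block r k)
include hm hN hsep

/-- An up-step `a` before a down-step `b` of the same block would give crossing arcs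
`m b < a < b < m a`, since both partners leave the block. -/
theorem apply_lt_self_of_le {k a b : ℕ} (hk : k < p) (ha : a ∈ block r k)
    (hb : b ∈ block r k) (hab : a ≤ b) (hmb : m b < b) : m a < a := by
  have haN : a < N := hN ▸ lt_blockStart_of_mem_block hk ha
  have hbN : b < N := hN ▸ lt_blockStart_of_mem_block hk hb
  obtain rfl | hab := hab.eq_or_lt
  · exact hmb
  by_contra! hma
  have hma' : a < m a := lt_of_le_of_ne hma (hm.ne a haN).symm
  have h1 := hsep k hk a ha
  have h2 := hsep k hk b hb
  rw [mem_block_iff] at ha hb h1 h2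
  have := hm.invol b hbN
  exact hm.noncrossing (m b) a haN (by omega) (by omega) (by omega)

theorem apply_lt_self_iff {k x : ℕ} (hk : k < p) (hx : x ∈ block r k) :
    m x < x ↔ x < blockStart r k + numClosers r m k := by
  have hxk := mem_block_iff.mp hx
  constructor
  · intro hmx
    have hsub : Icc (blockStart r k) x ⊆ {y ∈ block r k | m y < y} := fun y hy => by
      rw [mem_Icc] at hy
      exact mem_filter.mpr ⟨mem_block_iff.mpr ⟨hy.1, by omega⟩,
        hm.apply_lt_self_of_le hN hsep hk (mem_block_iff.mpr ⟨hy.1, by omega⟩) hx hy.2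
          hmx⟩
    have := card_le_card hsub
    rw [Nat.card_Icc] at this
    unfold numClosers
    omega
  · intro hlt
    by_contra! hmx
    have hsub : {y ∈ block r k | m y < y} ⊆ Ico (blockStart r k) x := fun y hy => by
      rw [mem_filter] at hy
      have hyk := mem_block_iff.mp hy.1
      refine mem_Ico.mpr ⟨hyk.1, ?_⟩
      by_contra! hxy
      have := hm.apply_lt_self_of_le hN hsep hk hx hy.1 hxy hy.2
      omega
    have := card_le_card hsub
    rw [Nat.card_Ico] at this
    unfold numClosers at hlt
    omega

theorem upWord_eq_pathWord : upWord N m = pathWord r p (numClosers r m) := by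
  funext x
  by_cases hx : x < N
  · obtain ⟨k, hk, hxk⟩ := exists_mem_block (hN ▸ hx)
    rw [pathWord_of_mem_block hk hxk, upWord, decide_eq_decide]
    have := hm.apply_lt_self_iff hN hsep hk hxk
    have := hm.ne x hx
    omega
  · rw [pathWord_of_le (by omega), upWord, decide_eq_false]
    omega

theorem height_upWord_blockStart_succ {k : ℕ} (hk : k < p) :
    height (upWord N m) (blockStart r (k + 1)) =
      height (upWord N m) (blockStart r k) + r k - 2 * numClosers r m k := by
  rw [hm.upWord_eq_pathWord hN hsep]
  exact height_pathWord_blockStart_succ hk (numClosers_le r m k)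

theorem numClosers_le_height_upWord {k : ℕ} (hk : k < p) :
    numClosers r m k ≤ height (upWord N m) (blockStart r k) := by
  have hle := hm.isDyck_upWord.height_nonneg (blockStart r k + numClosers r m k)
    ((blockStart_mono r hk).trans' (by rw [blockStart_succ]; have := numClosers_le r m k; omega)
      |>.trans hN.le)
  rw [hm.upWord_eq_pathWord hN hsep, height_pathWord_add hk (numClosers_le r m k)] at hle
  rw [hm.upWord_eq_pathWord hN hsep]
  rw [min_self] at hle
  omega

end IsNCPairing

def downSteps (r : ℕ → ℕ) (g : ℕ → ℤ) (k : ℕ) : ℕ := ((r k - (g (k + 1) - g k)) / 2).toNat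

theorem downSteps_eq {r : ℕ → ℕ} {g : ℕ → ℤ} {k s t : ℕ} (h : s + t = r k)
    (hd : g (k + 1) - g k = t - s) : downSteps r g k = s := by
  rw [downSteps, hd, ← h]
  push_cast
  rw [show (s : ℤ) + t - (t - s) = 2 * s by ring, Int.mul_ediv_cancel_left _ two_ne_zero]
  simp

noncomputable def liftPairing {N : ℕ} (m : Fin N → Fin N) : ℕ → ℕ :=
  Function.extend Fin.val (fun x => m x) id

theorem liftPairing_apply {N : ℕ} (m : Fin N → Fin N) (x : Fin N) :
    liftPairing m x = m x :=
  Fin.val_injective.extend_apply _ _ x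

noncomputable def liftPath {p : ℕ} (γ : Fin (p + 1) → ℤ) : ℕ → ℤ :=
  Function.extend Fin.val γ 0

theorem liftPath_apply {p : ℕ} (γ : Fin (p + 1) → ℤ) (k : Fin (p + 1)) : liftPath γ k = γ k :=
  Fin.val_injective.extend_apply _ _ k

theorem sum_filter_eq_blockStart {p : ℕ} {r : Fin p → ℕ} {R : ℕ → ℕ}
    (hR : ∀ i : Fin p, R i = r i) {n : ℕ} (hn : n ≤ p) :
    ∑ i ∈ univ.filter (fun i : Fin p => (i : ℕ) < n), r i = blockStart R n :=
  sum_bij (fun i _ => i) (fun i hi => by simpa using hi) (fun _ _ _ _ h => Fin.ext h)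
    (fun k hk => ⟨⟨k, by simp at hk; omega⟩, by simpa using hk, rfl⟩) (fun i _ => (hR i).symm)

/-- Membership in `NC₂(r)`, for `f` the block map `f_r`. -/
def IsNCBlockPairing {N p : ℕ} (f : Fin N → Fin p) (m : Fin N → Fin N) : Prop :=
  (∀ x, m (m x) = x) ∧ (∀ x, m x ≠ x) ∧ (¬ ∃ a b : Fin N, a < b ∧ b < m a ∧ m a < m b) ∧
    (∀ x, f (m x) ≠ f x)

def IsDyckPath {p : ℕ} (r : Fin p → ℕ) (γ : Fin (p + 1) → ℤ) : Prop :=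
  γ 0 = 0 ∧ γ (Fin.last p) = 0 ∧
    ∀ i : Fin p, (r i : ℤ) ≤ γ i.succ + γ i.castSucc ∧
      ∃ s t : ℕ, s + t = r i ∧ γ i.succ - γ i.castSucc = (t : ℤ) - (s : ℤ)

section Fin

variable {p N : ℕ} {r : Fin p → ℕ} {R : ℕ → ℕ} {f : Fin N → Fin p}

noncomputable def pathOfPairing (R : ℕ → ℕ) (m : Fin N → Fin N) : Fin (p + 1) → ℤ :=
  fun k => height (upWord N (liftPairing m)) (blockStart R k)

theorem IsDyckPath.isDyckProfile (hR : ∀ i : Fin p, R i = r i) {γ : Fin (p + 1) → ℤ}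
    (hγ : IsDyckPath r γ) : IsDyckProfile R p (downSteps R (liftPath γ)) (liftPath γ) := by
  have step : ∀ k < p, downSteps R (liftPath γ) k ≤ R k ∧
      liftPath γ (k + 1) = liftPath γ k + R k - 2 * downSteps R (liftPath γ) k ∧
      downSteps R (liftPath γ) k ≤ liftPath γ k := fun k hk => by
    obtain ⟨hle, s, t, hst, hd⟩ := hγ.2.2 ⟨k, hk⟩
    have hsucc := liftPath_apply γ (Fin.succ ⟨k, hk⟩)
    have hcast := liftPath_apply γ (Fin.castSucc ⟨k, hk⟩)
    simp only [Fin.val_succ, Fin.val_castSucc] at hsucc hcast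
    have hRk : R k = r ⟨k, hk⟩ := hR ⟨k, hk⟩
    rw [← hRk] at hle hst
    rw [← hsucc, ← hcast] at hle hd
    rw [downSteps_eq hst hd]
    omega
  exact ⟨by simpa using (liftPath_apply γ 0).trans hγ.1,
    by simpa using (liftPath_apply γ (Fin.last p)).trans hγ.2.1,
    fun k hk => (step k hk).1, fun k hk => (step k hk).2.1, fun k hk => (step k hk).2.2⟩

theorem IsDyckPath.isDyck (hR : ∀ i : Fin p, R i = r i) (hN : blockStart R p = N)
    {γ : Fin (p + 1) → ℤ} (hγ : IsDyckPath r γ) :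
    IsDyck (pathWord R p (downSteps R (liftPath γ))) N :=
  hN ▸ (hγ.isDyckProfile hR).isDyck_pathWord

noncomputable def pairingOfPath (hR : ∀ i : Fin p, R i = r i) (hN : blockStart R p = N)
    {γ : Fin (p + 1) → ℤ} (hγ : IsDyckPath r γ) : Fin N → Fin N :=
  fun x => ⟨partner (pathWord R p (downSteps R (liftPath γ))) x,
    (hγ.isDyck hR hN).partner_lt x.2⟩

theorem IsNCBlockPairing.isNCPairing {m : Fin N → Fin N} (hm : IsNCBlockPairing f m) :
    IsNCPairing N (liftPairing m) := by
  obtain ⟨hinv, hne, hnc, -⟩ := hm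
  have lift : ∀ x (hx : x < N), liftPairing m x = m ⟨x, hx⟩ := fun x hx =>
    liftPairing_apply m ⟨x, hx⟩
  refine ⟨fun x hx => ?_, fun x hx => ?_, fun x hx h => ?_, fun a b hb hab h1 h2 => ?_⟩
  · rw [lift x hx]; exact (m _).2
  · rw [lift x hx, lift _ (m _).2, Fin.eta, hinv]
  · rw [lift x hx] at h; exact hne _ (Fin.ext h)
  · have ha := hab.trans hb
    rw [lift a ha] at h1 h2
    rw [lift b hb] at h2
    exact hnc ⟨⟨a, ha⟩, ⟨b, hb⟩, hab, h1, h2⟩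

theorem pathOfPairing_pairingOfPath (hR : ∀ i : Fin p, R i = r i) (hN : blockStart R p = N)
    {γ : Fin (p + 1) → ℤ} (hγ : IsDyckPath r γ) :
    pathOfPairing R (pairingOfPath hR hN hγ) = γ := by
  have hw := hγ.isDyck hR hN
  have hword : upWord N (liftPairing (pairingOfPath hR hN hγ)) =
      pathWord R p (downSteps R (liftPath γ)) := by
    funext x
    by_cases hx : x < N
    · rw [upWord, liftPairing_apply _ ⟨x, hx⟩]
      simp only [pairingOfPath, hx, true_and]
      exact Bool.eq_iff_iff.mpr (decide_eq_true_iff.trans (hw.lt_partner_iff hx))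
    · rw [upWord, pathWord_of_le (by omega)]
      simp [hx]
  funext k
  rw [pathOfPairing, hword, (hγ.isDyckProfile hR).height_pathWord_blockStart (by omega),
    liftPath_apply]

variable (hf : ∀ x k, f x = k ↔ (x : ℕ) ∈ block R k)
include hf

theorem IsNCBlockPairing.separates {m : Fin N → Fin N} (hm : IsNCBlockPairing f m)
    (hN : blockStart R p = N) :
    ∀ k < p, ∀ x ∈ block R k, liftPairing m x ∉ block R k := fun k hk x hx hmx => by
  have hxN : x < N := hN ▸ lt_blockStart_of_mem_block hk hx
  rw [liftPairing_apply m ⟨x, hxN⟩] at hmx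
  exact hm.2.2.2 ⟨x, hxN⟩ (((hf _ ⟨k, hk⟩).mpr hmx).trans ((hf _ ⟨k, hk⟩).mpr hx).symm)

theorem isDyckPath_pathOfPairing (hR : ∀ i : Fin p, R i = r i) (hN : blockStart R p = N)
    {m : Fin N → Fin N} (hm : IsNCBlockPairing f m) : IsDyckPath r (pathOfPairing R m) := by
  have hM := hm.isNCPairing
  have hsep := hm.separates hf hN
  refine ⟨by simp [pathOfPairing, blockStart, height], ?_, fun i => ?_⟩
  · simpa [pathOfPairing, hN] using hM.isDyck_upWord.height_eq_zero
  have hstep := hM.height_upWord_blockStart_succ hN hsep i.2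
  have hle := hM.numClosers_le_height_upWord hN hsep i.2
  have hs := numClosers_le R (liftPairing m) i
  simp only [pathOfPairing, Fin.val_succ, Fin.val_castSucc, ← hR i]
  refine ⟨by omega, numClosers R (liftPairing m) i, R i - numClosers R (liftPairing m) i,
    by omega, by push_cast [hs]; omega⟩

theorem isNCBlockPairing_pairingOfPath (hR : ∀ i : Fin p, R i = r i) (hN : blockStart R p = N)
    {γ : Fin (p + 1) → ℤ} (hγ : IsDyckPath r γ) :
    IsNCBlockPairing f (pairingOfPath hR hN hγ) := by
  have hw := hγ.isDyck hR hN
  have hP := hw.isNCPairing_partner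
  refine ⟨fun x => Fin.ext (hP.invol x x.2), fun x h => hP.ne x x.2 (congrArg Fin.val h),
    fun ⟨a, b, hab, h1, h2⟩ => hP.noncrossing a b b.2 hab h1 h2, fun x h => ?_⟩
  exact partner_pathWord_notMem_block (hN ▸ hw) (f x).2 ((hf x _).mp rfl) ((hf _ _).mp h)

theorem downSteps_pathOfPairing (hN : blockStart R p = N) {m : Fin N → Fin N}
    (hm : IsNCBlockPairing f m) {k : ℕ} (hk : k < p) :
    downSteps R (liftPath (pathOfPairing (p := p) R m)) k = numClosers R (liftPairing m) k := by
  have hsucc := liftPath_apply (pathOfPairing R m) (Fin.succ ⟨k, hk⟩)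
  have hcast := liftPath_apply (pathOfPairing R m) (Fin.castSucc ⟨k, hk⟩)
  simp only [Fin.val_succ, Fin.val_castSucc, pathOfPairing] at hsucc hcast
  have := hm.isNCPairing.height_upWord_blockStart_succ hN (hm.separates hf hN) hk
  have hs := numClosers_le R (liftPairing m) k
  refine downSteps_eq (t := R k - numClosers R (liftPairing m) k) (by omega) ?_
  rw [hsucc, hcast]
  push_cast [hs]
  omega

theorem pairingOfPath_pathOfPairing (hR : ∀ i : Fin p, R i = r i) (hN : blockStart R p = N)
    {m : Fin N → Fin N} (hm : IsNCBlockPairing f m) :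
    pairingOfPath hR hN (isDyckPath_pathOfPairing hf hR hN hm) = m := by
  have hM := hm.isNCPairing
  funext x
  refine Fin.ext ?_
  simp only [pairingOfPath]
  rw [pathWord_congr fun k hk => downSteps_pathOfPairing hf hN hm hk,
    ← hM.upWord_eq_pathWord hN (hm.separates hf hN), hM.partner_upWord x.2, liftPairing_apply]

noncomputable def ncPairingEquivDyckPath (hR : ∀ i : Fin p, R i = r i)
    (hN : blockStart R p = N) :
    {m // IsNCBlockPairing f m} ≃ {γ // IsDyckPath r γ} where
  toFun m := ⟨pathOfPairing R m.1, isDyckPath_pathOfPairing hf hR hN m.2⟩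
  invFun γ := ⟨pairingOfPath hR hN γ.2, isNCBlockPairing_pairingOfPath hf hR hN γ.2⟩
  left_inv m := Subtype.ext (pairingOfPath_pathOfPairing hf hR hN m.2)
  right_inv γ := Subtype.ext (pathOfPairing_pairingOfPath hR hN γ.2)

end Fin

end NCPairing

theorem nc2_equiv_dyck_paths_general (p : ℕ) (r : Fin p → ℕ)
    (N : ℕ) (hN : N = ∑ i, r i) (f : Fin N → Fin p)
    (hf : ∀ (x : Fin N) (k : Fin p), f x = k ↔
      (∑ i ∈ Finset.univ.filter (fun i => i < k), r i) ≤ (x : ℕ) ∧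
        (x : ℕ) < ∑ i ∈ Finset.univ.filter (fun i => i ≤ k), r i) :
    Nonempty (
      {m : Fin N → Fin N //
          (∀ x, m (m x) = x) ∧ (∀ x, m x ≠ x) ∧
          (¬ ∃ a b : Fin N, a < b ∧ b < m a ∧ m a < m b) ∧
          (∀ x, f (m x) ≠ f x)} ≃
      {γ : Fin (p + 1) → ℤ //
          γ 0 = 0 ∧ γ (Fin.last p) = 0 ∧
          ∀ i : Fin p,
            (r i : ℤ) ≤ γ i.succ + γ i.castSucc ∧
            ∃ s t : ℕ, s + t = r i ∧ γ i.succ - γ i.castSucc = (t : ℤ) - (s : ℤ)}) := by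
  set R : ℕ → ℕ := Function.extend Fin.val r 0
  have hR : ∀ i : Fin p, R i = r i := Fin.val_injective.extend_apply r 0
  have hsum : ∀ n ≤ p, ∑ i ∈ univ.filter (fun i : Fin p => (i : ℕ) < n), r i =
      NCPairing.blockStart R n := fun n hn => NCPairing.sum_filter_eq_blockStart hR hn
  refine ⟨NCPairing.ncPairingEquivDyckPath (f := f) ?_ hR ?_⟩
  · intro x k
    rw [hf, NCPairing.block, mem_Ico, ← hsum k k.2.le, ← hsum (k + 1) k.2]
    simp only [Fin.lt_def, Fin.le_def, Nat.lt_succ_iff]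
  · rw [← hsum p le_rfl, hN]
    simp

/-- For an integer vector `r = (r₁,…,r_p)` of positive integers, the set
`NC₂(r)` of non-crossing pairings of `{1,…,|r|}` pairing no two elements inside
the same block of `1̂_r` is in bijection with the set `Γ(r)` of Dyck `r`-paths,
i.e. functions `γ : {0,…,p} → ℤ` with `γ 0 = γ p = 0`, `γ i + γ (i-1) ≥ rᵢ`
and `γ i - γ (i-1) ∈ Δ(rᵢ) = {t - s : s + t = rᵢ}`.
Pairings are encoded (0-indexed) as fixed-point-free involutions `m` of
`Fin N`, `N = |r|`; `f` is the block function of `1̂_r`. -/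
theorem nc2_equiv_dyck_paths (p : ℕ) (r : Fin p → ℕ) (hr : ∀ i, 1 ≤ r i)
    (N : ℕ) (hN : N = ∑ i, r i) (f : Fin N → Fin p)
    (hf : ∀ (x : Fin N) (k : Fin p), f x = k ↔
      (∑ i ∈ Finset.univ.filter (fun i => i < k), r i) ≤ (x : ℕ) ∧
        (x : ℕ) < ∑ i ∈ Finset.univ.filter (fun i => i ≤ k), r i) :
    Nonempty (
      {m : Fin N → Fin N //
          (∀ x, m (m x) = x) ∧ (∀ x, m x ≠ x) ∧
          (¬ ∃ a b : Fin N, a < b ∧ b < m a ∧ m a < m b) ∧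
          (∀ x, f (m x) ≠ f x)} ≃
      {γ : Fin (p + 1) → ℤ //
          γ 0 = 0 ∧ γ (Fin.last p) = 0 ∧
          ∀ i : Fin p,
            (r i : ℤ) ≤ γ i.succ + γ i.castSucc ∧
            ∃ s t : ℕ, s + t = r i ∧ γ i.succ - γ i.castSucc = (t : ℤ) - (s : ℤ)}) :=
  nc2_equiv_dyck_paths_general p r N hN f hf
end

section
/- For p ≥ 2 and r = ⟨2⟩_p = (2,2,...,2), the set Γ*(⟨2⟩_p) of irreducible Dyck r-paths is the singleton {(0, 2, 2, ..., 2, 0)}. -/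
/-- `γ : {0,…,p} → ℤ` (given as `γ : ℕ → ℤ`; only values on `{0,…,p}` matter)
is a Dyck `r`-path: `γ 0 = γ p = 0`, `γ i + γ (i-1) ≥ rᵢ` and
`γ i - γ (i-1) ∈ Δ(rᵢ) = {t - s : s + t = rᵢ}` for `1 ≤ i ≤ p`. -/
def IsDyckPath (r : ℕ → ℕ) (p : ℕ) (γ : ℕ → ℤ) : Prop :=
  γ 0 = 0 ∧ γ p = 0 ∧
    ∀ i, 1 ≤ i → i ≤ p →
      (r i : ℤ) ≤ γ i + γ (i - 1) ∧
      ∃ s t : ℕ, s + t = r i ∧ γ i - γ (i - 1) = (t : ℤ) - (s : ℤ)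

/-- For `p ≥ 2` and `r = ⟨2⟩_p = (2,…,2)`, the set `Γ*(⟨2⟩_p)` of irreducible
Dyck `r`-paths is the singleton `{(0,2,2,…,2,0)}`: a path `γ` is an irreducible
Dyck `⟨2⟩_p`-path iff `γ i = 0` for `i ∈ {0,p}` and `γ i = 2` for `0 < i < p`.
Irreducibility: no pair `(x,y) ≠ (0,p)`, `x < y ≤ p`, such that the shifted path
`i ↦ γ (x+i) - γ x` is a Dyck `(r_{x+1},…,r_y)`-path. -/
theorem irreducible_dyck_two_paths_singleton (p : ℕ) (hp : 2 ≤ p) (γ : ℕ → ℤ) :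
    (IsDyckPath (fun _ => 2) p γ ∧
      ¬ ∃ x y : ℕ, x < y ∧ y ≤ p ∧ ¬(x = 0 ∧ y = p) ∧
          IsDyckPath (fun _ => 2) (y - x) (fun i => γ (x + i) - γ x))
    ↔ (∀ i ≤ p, γ i = if i = 0 ∨ i = p then 0 else 2) := by
  classical
  constructor
  · rintro ⟨⟨h0, hpz, hstep⟩, hIrr⟩
    -- basic step analysis
    have hstep' : ∀ i, 1 ≤ i → i ≤ p →
        2 ≤ γ i + γ (i - 1) ∧
          (γ i - γ (i - 1) = 2 ∨ γ i - γ (i - 1) = 0 ∨ γ i - γ (i - 1) = -2) := by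
      intro i h1 h2
      obtain ⟨hs, s, t, hst, hd⟩ := hstep i h1 h2
      have hs' : (2 : ℤ) ≤ γ i + γ (i - 1) := hs
      have hst' : s + t = 2 := hst
      exact ⟨hs', by omega⟩
    -- parity
    have hmod : ∀ i, i ≤ p → γ i % 2 = 0 := by
      intro i
      induction i with
      | zero => intro _; simp [h0]
      | succ n ih =>
        intro hn
        obtain ⟨_, hd⟩ := hstep' (n + 1) (by omega) hn
        have := ih (by omega)
        simp only [Nat.add_sub_cancel] at hd
        omega
    -- nonnegativity
    have hnn : ∀ i, i ≤ p → 0 ≤ γ i := by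
      intro i
      induction i with
      | zero => intro _; simp [h0]
      | succ n ih =>
        intro hn
        obtain ⟨hs, hd⟩ := hstep' (n + 1) (by omega) hn
        have := ih (by omega)
        simp only [Nat.add_sub_cancel] at hs hd
        omega
    -- interior values are nonzero (irreducibility at (0, m))
    have hne : ∀ m, 0 < m → m < p → γ m ≠ 0 := by
      intro m hm0 hmp hzero
      apply hIrr
      refine ⟨0, m, hm0, le_of_lt hmp, by omega, ?_, ?_, ?_⟩
      · simp [h0]
      · simpa [h0] using hzero
      · intro i h1 h2
        simp only [Nat.sub_zero] at h2
        obtain ⟨hs, s, t, hst, hd⟩ := hstep i h1 (le_trans h2 (le_of_lt hmp))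
        refine ⟨?_, s, t, hst, ?_⟩
        · simpa [h0] using hs
        · simpa [h0] using hd
    have hge2 : ∀ m, 0 < m → m < p → 2 ≤ γ m := by
      intro m hm0 hmp
      have := hnn m (le_of_lt hmp)
      have := hmod m (le_of_lt hmp)
      have := hne m hm0 hmp
      omega
    -- boundary-adjacent values
    have h1v : γ 1 = 2 := by
      obtain ⟨hs, hd⟩ := hstep' 1 le_rfl (by omega)
      simp only [Nat.sub_self] at hs hd
      omega
    have hp1 : γ (p - 1) = 2 := by
      obtain ⟨hs, hd⟩ := hstep' p (by omega) le_rfl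
      omega
    -- values never exceed 2
    have hle2 : ∀ i, i ≤ p → γ i ≤ 2 := by
      by_contra hcon
      push_neg at hcon
      obtain ⟨i0, hi0p, hi0⟩ := hcon
      have hi0mod := hmod i0 hi0p
      have h4 : 4 ≤ γ i0 := by omega
      have hi0ne0 : i0 ≠ 0 := by rintro rfl; omega
      have hi0nep : i0 ≠ p := by rintro rfl; omega
      have hi0lt : i0 < p := lt_of_le_of_ne hi0p hi0nep
      -- x : largest index ≤ i0 with value 2
      have h1lei0 : 1 ≤ i0 := by omega
      obtain ⟨x, hx2, hx1, hxlt, hxmax⟩ :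
          ∃ x, γ x = 2 ∧ 1 ≤ x ∧ x < i0 ∧ ∀ k, x < k → k ≤ i0 → γ k ≠ 2 := by
        set P : ℕ → Prop := fun k => γ k = 2 with hP
        refine ⟨Nat.findGreatest P i0, Nat.findGreatest_spec (P := P) h1lei0 h1v,
          Nat.le_findGreatest (P := P) h1lei0 h1v, ?_,
          fun k hk hkb => Nat.findGreatest_is_greatest (P := P) hk hkb⟩
        have hle := Nat.findGreatest_le (P := P) i0
        have hne' : Nat.findGreatest P i0 ≠ i0 := by
          intro h
          have := Nat.findGreatest_spec (P := P) h1lei0 h1v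
          rw [h] at this
          change γ i0 = 2 at this
          omega
        omega
      -- y : smallest index ≥ i0 with value 2
      have hwit : γ (i0 + (p - 1 - i0)) = 2 := by
        have he : i0 + (p - 1 - i0) = p - 1 := by omega
        rw [he]; exact hp1
      have hQ : ∃ j, γ (i0 + j) = 2 := ⟨_, hwit⟩
      obtain ⟨y, hy2, hylep, hi0lty, hymin⟩ :
          ∃ y, γ y = 2 ∧ y ≤ p - 1 ∧ i0 < y ∧ ∀ m, i0 ≤ m → m < y → γ m ≠ 2 := by
        refine ⟨i0 + Nat.find hQ, Nat.find_spec hQ, ?_, ?_, ?_⟩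
        · have := Nat.find_min' hQ hwit; omega
        · rcases Nat.eq_zero_or_pos (Nat.find hQ) with h | h
          · exfalso
            have hsp := Nat.find_spec hQ
            rw [h] at hsp
            simp only [Nat.add_zero] at hsp
            omega
          · omega
        · intro m hm1 hm2
          have hlt : m - i0 < Nat.find hQ := by omega
          have hmin := Nat.find_min hQ hlt
          have he : i0 + (m - i0) = m := by omega
          rwa [he] at hmin
      -- middle values are ≥ 4
      have hmid : ∀ m, x < m → m < y → 4 ≤ γ m := by
        intro m hm1 hm2
        have hne2 : γ m ≠ 2 := by
          rcases le_or_gt m i0 with h | h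
          · exact hxmax m hm1 h
          · exact hymin m (le_of_lt h) hm2
        have h2le : 2 ≤ γ m := hge2 m (by omega) (by omega)
        have := hmod m (by omega)
        omega
      have hxy2 : x + 2 ≤ y := by omega
      -- contradiction via irreducibility at (x, y)
      apply hIrr
      refine ⟨x, y, by omega, by omega, by omega, ?_, ?_, ?_⟩
      · simp
      · have he : x + (y - x) = y := by omega
        show γ (x + (y - x)) - γ x = 0
        rw [he, hy2, hx2]; ring
      · intro i h1 h2
        have hk1 : x + (i - 1) = x + i - 1 := by omega
        obtain ⟨hs, s, t, hst, hd⟩ := hstep (x + i) (by omega) (by omega)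
        have hcase1 : γ (x + i) = 2 ∧ x + i = y ∨ 4 ≤ γ (x + i) := by
          rcases eq_or_lt_of_le (show x + i ≤ y by omega) with h | h
          · exact Or.inl ⟨by rw [h]; exact hy2, h⟩
          · exact Or.inr (hmid (x + i) (by omega) h)
        have hcase2 : γ (x + i - 1) = 2 ∧ x + i - 1 = x ∨ 4 ≤ γ (x + i - 1) := by
          rcases eq_or_lt_of_le (show x ≤ x + i - 1 by omega) with h | h
          · exact Or.inl ⟨by rw [← h]; exact hx2, h.symm⟩
          · exact Or.inr (hmid (x + i - 1) h (by omega))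
        refine ⟨?_, s, t, hst, ?_⟩
        · show (2 : ℤ) ≤ (γ (x + i) - γ x) + (γ (x + (i - 1)) - γ x)
          rw [hk1, hx2]
          rcases hcase1 with ⟨h, hey⟩ | h <;> rcases hcase2 with ⟨h', hex⟩ | h' <;> omega
        · show γ (x + i) - γ x - (γ (x + (i - 1)) - γ x) = (t : ℤ) - s
          rw [hk1]
          omega
    -- conclude the forward direction
    intro i hi
    split_ifs with h
    · rcases h with rfl | rfl
      · exact h0
      · exact hpz
    · push_neg at h
      have := hge2 i (by omega) (lt_of_le_of_ne hi h.2)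
      have := hle2 i hi
      omega
  · -- reverse direction
    intro hshape
    have h0 : γ 0 = 0 := by simpa using hshape 0 (by omega)
    have hpz : γ p = 0 := by simpa using hshape p le_rfl
    constructor
    · refine ⟨h0, hpz, ?_⟩
      intro i h1 h2
      have hi : γ i = if i = 0 ∨ i = p then 0 else 2 := hshape i h2
      have hi1 : γ (i - 1) = if i - 1 = 0 ∨ i - 1 = p then 0 else 2 :=
        hshape (i - 1) (by omega)
      rcases eq_or_lt_of_le h1 with h | h
      · -- i = 1
        have hi1' : γ (i - 1) = 0 := by rw [hi1, if_pos (Or.inl (by omega))]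
        have hi' : γ i = 2 := by rw [hi, if_neg (by omega)]
        exact ⟨by show (2:ℤ) ≤ _; omega, 0, 2, rfl, by push_cast; omega⟩
      · rcases eq_or_lt_of_le h2 with h' | h'
        · -- i = p
          have hi1' : γ (i - 1) = 2 := by rw [hi1, if_neg (by omega)]
          have hi' : γ i = 0 := by rw [hi, if_pos (Or.inr h')]
          exact ⟨by show (2:ℤ) ≤ _; omega, 2, 0, rfl, by push_cast; omega⟩
        · -- 1 < i < p
          have hi1' : γ (i - 1) = 2 := by rw [hi1, if_neg (by omega)]
          have hi' : γ i = 2 := by rw [hi, if_neg (by omega)]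
          exact ⟨by show (2:ℤ) ≤ _; omega, 1, 1, rfl, by push_cast; omega⟩
    · rintro ⟨x, y, hxy, hyp, hne, hd0, hdy, hdstep⟩
      obtain ⟨hs, s, t, hst, hdd⟩ := hdstep 1 le_rfl (by omega)
      simp only [Nat.sub_self, Nat.add_zero] at hs hdd
      have hs' : (2 : ℤ) ≤ (γ (x + 1) - γ x) + (γ (x + 0) - γ x) := hs
      have hst' : s + t = 2 := hst
      have hstep1 : γ (x + 1) - γ x = 2 := by simp only [Nat.add_zero] at hs'; omega
      have hx : γ x = if x = 0 ∨ x = p then 0 else 2 := hshape x (by omega)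
      have hx1 : γ (x + 1) = if x + 1 = 0 ∨ x + 1 = p then 0 else 2 :=
        hshape (x + 1) (by omega)
      have hx0 : x = 0 := by
        by_contra hx0
        have hxnep : x ≠ p := by omega
        rw [if_neg (by tauto)] at hx
        split_ifs at hx1 <;> omega
      subst hx0
      have hgy : γ y = 0 := by
        have := hdy
        simp only [Nat.sub_zero, Nat.zero_add, zero_add] at this
        rw [h0] at this
        omega
      have hy : γ y = if y = 0 ∨ y = p then 0 else 2 := hshape y hyp
      have : y = p := by
        split_ifs at hy with h
        · rcases h with h | h
          · omega
          · exact h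
        · omega
      exact hne ⟨rfl, this⟩
end

section
/- With T_r = Σ_{k=0}^{r} S^{r−k}(S*)^k in the Toeplitz algebra and ω(T) = ⟨e₀, T e₀⟩ the vacuum state, for any positive integers r₁, ..., r_p one has ω(T_{r₁} T_{r₂} ⋯ T_{r_p}) = #Γ(r), the number of Dyck r-paths. -/
set_option linter.unusedSectionVars false
open scoped InnerProductSpace
set_option maxHeartbeats 1000000

namespace ToeplitzDyckAux

def C : List ℕ → ℕ → ℕ
  | [], j => if j = 0 then 1 else 0
  | r :: l, j => ∑ k ∈ Finset.range (r + 1), if k ≤ j then C l (j - k + (r - k)) else 0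

lemma C_nil (j : ℕ) : C [] j = if j = 0 then 1 else 0 := rfl

lemma C_cons (r : ℕ) (l : List ℕ) (j : ℕ) :
    C (r :: l) j = ∑ k ∈ Finset.range (r + 1), if k ≤ j then C l (j - k + (r - k)) else 0 := rfl

def PathCond (p : ℕ) (r : Fin p → ℕ) (j : ℤ) (γ : Fin (p + 1) → ℤ) : Prop :=
  γ 0 = 0 ∧ γ (Fin.last p) = j ∧
    ∀ i : Fin p,
      (r i : ℤ) ≤ γ i.succ + γ i.castSucc ∧
      ∃ s t : ℕ, s + t = r i ∧ γ i.succ - γ i.castSucc = (t : ℤ) - (s : ℤ)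

lemma nat_card_sigma {n : ℕ} (F : Fin n → Type*) [∀ k, Finite (F k)] :
    Nat.card (Σ k, F k) = ∑ k, Nat.card (F k) := by
  haveI : ∀ k, Fintype (F k) := fun k => Fintype.ofFinite _
  simp only [Nat.card_eq_fintype_card, Fintype.card_sigma]

lemma last_step {p : ℕ} (r : Fin (p + 1) → ℕ) (j : ℕ) (γ : Fin (p + 2) → ℤ)
    (h : PathCond (p + 1) r (j : ℤ) γ) :
    ∃ t : ℕ, t ≤ r (Fin.last p) ∧ t ≤ j ∧
      γ ((Fin.last p).castSucc) = (j : ℤ) + (r (Fin.last p) : ℤ) - 2 * (t : ℤ) := by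
  obtain ⟨h0, hl, hstep⟩ := h
  obtain ⟨hsum, s, t, hst, hd⟩ := hstep (Fin.last p)
  rw [Fin.succ_last, hl] at hsum hd
  exact ⟨t, by omega, by omega, by omega⟩

lemma card_path (p : ℕ) :
    ∀ (r : Fin p → ℕ) (j : ℕ),
      Finite {γ : Fin (p + 1) → ℤ // PathCond p r (j : ℤ) γ} ∧
      Nat.card {γ : Fin (p + 1) → ℤ // PathCond p r (j : ℤ) γ} = C (List.ofFn r).reverse j := by
  induction p with
  | zero =>
    intro r j
    by_cases hj : j = 0
    · subst hj
      haveI : Unique {γ : Fin 1 → ℤ // PathCond 0 r ((0 : ℕ) : ℤ) γ} :=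
        { default := ⟨fun _ => 0, rfl, by norm_num, fun i => i.elim0⟩
          uniq := by
            rintro ⟨γ, h0, hl, -⟩
            apply Subtype.ext
            show γ = fun _ => 0
            funext i
            rw [Subsingleton.elim i 0]
            exact h0 }
      refine ⟨inferInstance, ?_⟩
      rw [Nat.card_unique]
      simp [C_nil]
    · haveI : IsEmpty {γ : Fin 1 → ℤ // PathCond 0 r (j : ℤ) γ} := by
        constructor
        rintro ⟨γ, h0, hl, -⟩
        rw [show Fin.last 0 = 0 from rfl, h0] at hl
        exact hj (by exact_mod_cast hl.symm)
      refine ⟨inferInstance, ?_⟩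
      simp [C_nil, hj]
  | succ p ih =>
    intro r j
    classical
    have hofn : (List.ofFn r).reverse
        = r (Fin.last p) :: (List.ofFn fun i : Fin p => r i.castSucc).reverse := by
      rw [List.ofFn_succ' r, List.concat_eq_append, List.reverse_append]
      rfl
    set f : {γ : Fin (p + 2) → ℤ // PathCond (p + 1) r (j : ℤ) γ}
        → Fin (r (Fin.last p) + 1) :=
      fun x => ⟨Classical.choose (last_step r j x.1 x.2),
        Nat.lt_succ_of_le (Classical.choose_spec (last_step r j x.1 x.2)).1⟩ with hf
    have fspec : ∀ x : {γ : Fin (p + 2) → ℤ // PathCond (p + 1) r (j : ℤ) γ},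
        ((f x : ℕ) : ℤ) ≤ (j : ℤ) ∧
        x.1 ((Fin.last p).castSucc)
          = (j : ℤ) + (r (Fin.last p) : ℤ) - 2 * ((f x : ℕ) : ℤ) := by
      intro x
      obtain ⟨h1, h2, h3⟩ := Classical.choose_spec (last_step r j x.1 x.2)
      have h2' : (f x : ℕ) ≤ j := h2
      exact ⟨by exact_mod_cast h2', h3⟩
    have fiber_equiv : ∀ k : Fin (r (Fin.last p) + 1),
        {x : {γ : Fin (p + 2) → ℤ // PathCond (p + 1) r (j : ℤ) γ} // f x = k}
          ≃ {γ' : Fin (p + 1) → ℤ //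
              (k : ℕ) ≤ j ∧
              PathCond p (fun i : Fin p => r i.castSucc)
                ((j : ℤ) + (r (Fin.last p) : ℤ) - 2 * ((k : ℕ) : ℤ)) γ'} := by
      intro k
      have hkR : (k : ℕ) ≤ r (Fin.last p) := Nat.lt_succ_iff.mp k.2
      refine
        { toFun := fun y => ⟨y.1.1 ∘ Fin.castSucc, ?_, ?_, ?_, ?_⟩
          invFun := fun z => ⟨⟨Fin.snoc z.1 (j : ℤ), ?_, ?_, ?_⟩, ?_⟩
          left_inv := ?_
          right_inv := ?_ }
      · -- (k : ℕ) ≤ j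
        have h1 := (fspec y.1).1
        rw [y.2] at h1
        exact_mod_cast h1
      · -- start at 0
        show y.1.1 (Fin.castSucc 0) = 0
        rw [Fin.castSucc_zero]
        exact y.1.2.1
      · -- endpoint
        show y.1.1 (Fin.castSucc (Fin.last p)) = _
        have h2 := (fspec y.1).2
        rw [y.2] at h2
        exact h2
      · -- steps
        intro i
        have hstep := y.1.2.2.2 i.castSucc
        rw [Fin.succ_castSucc] at hstep
        exact hstep
      · -- snoc start
        exact (@Fin.snoc_castSucc (p + 1) (fun _ => ℤ) (j : ℤ) z.1 0).trans z.2.2.1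
      · -- snoc endpoint
        exact Fin.snoc_last _ _
      · -- snoc steps
        intro i
        induction i using Fin.lastCases with
        | last =>
          have hend := z.2.2.2.1
          have hkj := z.2.1
          rw [Fin.succ_last, Fin.snoc_last, Fin.snoc_castSucc, hend]
          constructor
          · omega
          · exact ⟨r (Fin.last p) - (k : ℕ), (k : ℕ), by omega, by omega⟩
        | cast i' =>
          have hstep := z.2.2.2.2 i'
          rw [Fin.succ_castSucc, Fin.snoc_castSucc, Fin.snoc_castSucc]
          exact hstep
      · -- f value of snoc
        apply Fin.ext
        have key : ∀ x : {γ : Fin (p + 2) → ℤ // PathCond (p + 1) r (j : ℤ) γ},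
            x.1 ((Fin.last p).castSucc)
              = (j : ℤ) + (r (Fin.last p) : ℤ) - 2 * ((k : ℕ) : ℤ) →
            (f x : ℕ) = (k : ℕ) := by
          intro x hx
          have h2 := (fspec x).2
          omega
        apply key
        exact (@Fin.snoc_castSucc (p + 1) (fun _ => ℤ) (j : ℤ) z.1 (Fin.last p)).trans
          z.2.2.2.1
      · -- left inverse
        rintro ⟨⟨γ, hγ⟩, hfx⟩
        apply Subtype.ext
        apply Subtype.ext
        funext i
        induction i using Fin.lastCases with
        | last => simp [Fin.snoc_last, hγ.2.1]
        | cast i' => simp [Fin.snoc_castSucc]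
      · -- right inverse
        rintro ⟨γ', hγ'⟩
        apply Subtype.ext
        funext i
        simp [Fin.snoc_castSucc]
    have fib_card : ∀ k : Fin (r (Fin.last p) + 1),
        Finite {γ' : Fin (p + 1) → ℤ //
            (k : ℕ) ≤ j ∧
            PathCond p (fun i : Fin p => r i.castSucc)
              ((j : ℤ) + (r (Fin.last p) : ℤ) - 2 * ((k : ℕ) : ℤ)) γ'} ∧
        Nat.card {γ' : Fin (p + 1) → ℤ //
            (k : ℕ) ≤ j ∧
            PathCond p (fun i : Fin p => r i.castSucc)
              ((j : ℤ) + (r (Fin.last p) : ℤ) - 2 * ((k : ℕ) : ℤ)) γ'} =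
          if (k : ℕ) ≤ j then
            C (List.ofFn fun i : Fin p => r i.castSucc).reverse
              (j - (k : ℕ) + (r (Fin.last p) - (k : ℕ)))
          else 0 := by
      intro k
      have hkR : (k : ℕ) ≤ r (Fin.last p) := Nat.lt_succ_iff.mp k.2
      by_cases hk : (k : ℕ) ≤ j
      · have hcast : ((j - (k : ℕ) + (r (Fin.last p) - (k : ℕ)) : ℕ) : ℤ)
            = (j : ℤ) + (r (Fin.last p) : ℤ) - 2 * ((k : ℕ) : ℤ) := by
          omega
        have E2 : {γ' : Fin (p + 1) → ℤ //
              (k : ℕ) ≤ j ∧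
              PathCond p (fun i : Fin p => r i.castSucc)
                ((j : ℤ) + (r (Fin.last p) : ℤ) - 2 * ((k : ℕ) : ℤ)) γ'}
            ≃ {γ' : Fin (p + 1) → ℤ //
              PathCond p (fun i : Fin p => r i.castSucc)
                (((j - (k : ℕ) + (r (Fin.last p) - (k : ℕ)) : ℕ) : ℤ)) γ'} :=
          Equiv.subtypeEquivRight (fun γ' => by
            rw [hcast]
            exact ⟨fun h => h.2, fun h => ⟨hk, h⟩⟩)
        obtain ⟨hfin, hcard⟩ := ih (fun i : Fin p => r i.castSucc)
          (j - (k : ℕ) + (r (Fin.last p) - (k : ℕ)))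
        refine ⟨Finite.of_equiv _ E2.symm, ?_⟩
        rw [Nat.card_congr E2, hcard, if_pos hk]
      · haveI : IsEmpty {γ' : Fin (p + 1) → ℤ //
            (k : ℕ) ≤ j ∧
            PathCond p (fun i : Fin p => r i.castSucc)
              ((j : ℤ) + (r (Fin.last p) : ℤ) - 2 * ((k : ℕ) : ℤ)) γ'} :=
          ⟨fun z => hk z.2.1⟩
        exact ⟨inferInstance, by simp [hk]⟩
    haveI : ∀ k : Fin (r (Fin.last p) + 1),
        Finite {γ' : Fin (p + 1) → ℤ //
          (k : ℕ) ≤ j ∧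
          PathCond p (fun i : Fin p => r i.castSucc)
            ((j : ℤ) + (r (Fin.last p) : ℤ) - 2 * ((k : ℕ) : ℤ)) γ'} :=
      fun k => (fib_card k).1
    haveI hfibfin : ∀ k : Fin (r (Fin.last p) + 1),
        Finite {x : {γ : Fin (p + 2) → ℤ // PathCond (p + 1) r (j : ℤ) γ} // f x = k} :=
      fun k => Finite.of_equiv _ (fiber_equiv k).symm
    have Esig : {γ : Fin (p + 2) → ℤ // PathCond (p + 1) r (j : ℤ) γ}
        ≃ Σ k, {x : {γ : Fin (p + 2) → ℤ // PathCond (p + 1) r (j : ℤ) γ} // f x = k} :=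
      (Equiv.sigmaFiberEquiv f).symm
    constructor
    · exact Finite.of_equiv _ Esig.symm
    · rw [Nat.card_congr Esig, nat_card_sigma, hofn, C_cons]
      rw [← Fin.sum_univ_eq_sum_range (fun m => if m ≤ j then
        C (List.ofFn fun i : Fin p => r i.castSucc).reverse
          (j - m + (r (Fin.last p) - m)) else 0) (r (Fin.last p) + 1)]
      refine Finset.sum_congr rfl fun k _ => ?_
      rw [Nat.card_congr (fiber_equiv k), (fib_card k).2]

variable {H : Type*} [NormedAddCommGroup H] [InnerProductSpace ℂ H] [CompleteSpace H]

lemma basis_ext (e : HilbertBasis ℕ ℂ H) {x y : H}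
    (h : ∀ n, ⟪e n, x⟫_ℂ = ⟪e n, y⟫_ℂ) : x = y := by
  apply e.repr.injective
  apply lp.ext
  funext n
  rw [e.repr_apply_apply, e.repr_apply_apply, h]

lemma inner_basis (e : HilbertBasis ℕ ℂ H) (m n : ℕ) :
    ⟪e m, e n⟫_ℂ = if m = n then 1 else 0 := orthonormal_iff_ite.mp e.orthonormal m n

variable (e : HilbertBasis ℕ ℂ H) (S : H →L[ℂ] H) (hS : ∀ n, S (e n) = e (n + 1))
include hS

lemma adjoint_zero : (ContinuousLinearMap.adjoint S) (e 0) = 0 := by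
  apply basis_ext e
  intro n
  rw [ContinuousLinearMap.adjoint_inner_right, hS, inner_basis, inner_zero_right]
  simp

lemma adjoint_succ (m : ℕ) : (ContinuousLinearMap.adjoint S) (e (m + 1)) = e m := by
  apply basis_ext e
  intro n
  rw [ContinuousLinearMap.adjoint_inner_right, hS, inner_basis, inner_basis]
  simp

lemma adjoint_pow (k j : ℕ) :
    ((ContinuousLinearMap.adjoint S) ^ k) (e j) = if k ≤ j then e (j - k) else 0 := by
  induction k generalizing j with
  | zero => simp
  | succ k ihk =>
    rw [pow_succ, ContinuousLinearMap.mul_apply]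
    cases j with
    | zero => rw [adjoint_zero e S hS, map_zero, if_neg (by omega)]
    | succ m =>
      rw [adjoint_succ e S hS, ihk]
      have : k + 1 ≤ m + 1 ↔ k ≤ m := by omega
      rw [if_congr this rfl rfl, show m + 1 - (k + 1) = m - k by omega]

lemma shift_pow (a n : ℕ) : (S ^ a) (e n) = e (n + a) := by
  induction a generalizing n with
  | zero => simp
  | succ a iha =>
    rw [pow_succ, ContinuousLinearMap.mul_apply, hS, iha]
    congr 1
    omega

variable (T : ℕ → (H →L[ℂ] H))
    (hT : ∀ r, T r = ∑ k ∈ Finset.range (r + 1),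
      S ^ (r - k) * (ContinuousLinearMap.adjoint S) ^ k)
include hT

lemma T_apply (r j : ℕ) :
    T r (e j) = ∑ k ∈ Finset.range (r + 1), if k ≤ j then e (j - k + (r - k)) else 0 := by
  rw [hT, ContinuousLinearMap.sum_apply]
  refine Finset.sum_congr rfl fun k _ => ?_
  rw [ContinuousLinearMap.mul_apply, adjoint_pow e S hS k j]
  by_cases h : k ≤ j
  · rw [if_pos h, if_pos h, shift_pow e S hS]
  · rw [if_neg h, if_neg h, map_zero]

lemma inner_prod_eq (l : List ℕ) (j : ℕ) :
    ⟪e 0, ((l.map T).prod) (e j)⟫_ℂ = (C l.reverse j : ℂ) := by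
  induction l using List.reverseRecOn generalizing j with
  | nil =>
    simp only [List.map_nil, List.prod_nil, List.reverse_nil, ContinuousLinearMap.one_apply]
    rw [inner_basis e 0 j, C_nil]
    by_cases h : j = 0 <;> simp [h, eq_comm]
  | append_singleton l r ihl =>
    have hrev : (l ++ [r]).reverse = r :: l.reverse := by simp
    rw [List.map_append, List.prod_append, List.map_singleton, List.prod_singleton,
      ContinuousLinearMap.mul_apply, T_apply e S hS T hT, map_sum, inner_sum,
      hrev, C_cons, Nat.cast_sum]
    refine Finset.sum_congr rfl fun k _ => ?_
    by_cases h : k ≤ j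
    · simp only [if_pos h]
      exact ihl _
    · simp only [if_neg h, map_zero, inner_zero_right, Nat.cast_zero]


end ToeplitzDyckAux

open scoped InnerProductSpace

/-- With `T r = ∑_{k=0}^{r} S^{r-k} (S*)^k` for the unilateral shift `S` on
`ℓ²(ℕ)` and the vacuum state `ω(T) = ⟨e 0, T (e 0)⟩`, for positive integers
`r₁, …, r_p` one has `ω(T_{r₁} ⋯ T_{r_p}) = #Γ(r)`, the number of Dyck
`r`-paths `γ : {0,…,p} → ℤ` with `γ 0 = γ p = 0`, `γ i + γ (i-1) ≥ rᵢ` and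
`γ i - γ (i-1) ∈ Δ(rᵢ) = {t - s : s + t = rᵢ}`. -/
theorem toeplitz_vacuum_state_counts_dyck_paths
    {H : Type*} [NormedAddCommGroup H] [InnerProductSpace ℂ H] [CompleteSpace H]
    (e : HilbertBasis ℕ ℂ H) (S : H →L[ℂ] H) (hS : ∀ n, S (e n) = e (n + 1))
    (T : ℕ → (H →L[ℂ] H))
    (hT : ∀ r, T r = ∑ k ∈ Finset.range (r + 1),
      S ^ (r - k) * (ContinuousLinearMap.adjoint S) ^ k)
    (p : ℕ) (r : Fin p → ℕ) (hr : ∀ i, 1 ≤ r i) :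
    ⟪e 0, ((List.ofFn fun i : Fin p => T (r i)).prod) (e 0)⟫_ℂ
      = (Nat.card {γ : Fin (p + 1) → ℤ //
          γ 0 = 0 ∧ γ (Fin.last p) = 0 ∧
          ∀ i : Fin p,
            (r i : ℤ) ≤ γ i.succ + γ i.castSucc ∧
            ∃ s t : ℕ, s + t = r i ∧ γ i.succ - γ i.castSucc = (t : ℤ) - (s : ℤ)} : ℂ) := by
  have hmap : (List.ofFn fun i : Fin p => T (r i)) = (List.ofFn r).map T := by
    rw [List.map_ofFn]
    rfl
  rw [hmap, ToeplitzDyckAux.inner_prod_eq e S hS T hT (List.ofFn r) 0,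
    ← (ToeplitzDyckAux.card_path p r 0).2]
  have hpred : (fun γ : Fin (p + 1) → ℤ => ToeplitzDyckAux.PathCond p r ((0 : ℕ) : ℤ) γ)
      = (fun γ : Fin (p + 1) → ℤ =>
          γ 0 = 0 ∧ γ (Fin.last p) = 0 ∧
          ∀ i : Fin p,
            (r i : ℤ) ≤ γ i.succ + γ i.castSucc ∧
            ∃ s t : ℕ, s + t = r i ∧ γ i.succ - γ i.castSucc = (t : ℤ) - (s : ℤ)) := by
    funext γ
    simp [ToeplitzDyckAux.PathCond]
  rw [hpred]
end

section
/- For any integer vector r = (r₁, ..., r_p) of positive integers with |r| even, the number of semi-standard Young tableaux of rectangular shape (|r|/2, |r|/2) (2 rows, |r|/2 columns) and weight r (containing rᵢ entries equal to i, rows non-decreasing, columns strictly increasing) equals #NC₂(r), the number of non-crossing pairings of {1,...,|r|} pairing no two elements within the same block of 1̂_r. -/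
/-!
Both sets are in bijection with the Dyck words `w` of length `2N` (`true` = up-step) in which,
inside every block of `1̂_r`, all down-steps come before all up-steps.

A non-crossing pairing `m` gives the word marking the left point `x < m x` of each pair as an
up-step; conversely an up-step of a Dyck word is paired with the step at which the height first
returns to its level. Under this classical bijection, no pair lies inside a block exactly when
the word is monotone on each block: an up-step `s` followed in its block by a down-step `t`
would force the crossing `m t < s < t < m s`.

A two-row tableau `T` gives the word whose block `k` starts with as many down-steps as there are
`k`s in the second row of `T`. Column strictness says that every entry `≤ k` of the second row
lies below an entry `< k` of the first row, which is the ballot condition. Conversely the rows are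
read back from the word as the block labels of its up-steps and of its down-steps, in order.
-/

open Finset

section counting

lemma Fin.card_filter_le_val_and_val_lt {n a b : ℕ} (hb : b ≤ n) :
    #{y : Fin n | a ≤ (y : ℕ) ∧ (y : ℕ) < b} = b - a := by
  rw [← Nat.card_Ico, ← card_map Fin.valEmbedding]
  congr 1
  ext z
  simp only [mem_map, mem_filter, mem_univ, true_and, Fin.valEmbedding_apply, mem_Ico]
  exact ⟨by rintro ⟨y, hy, rfl⟩; exact hy, fun hz => ⟨⟨z, by omega⟩, hz, rfl⟩⟩

lemma Fin.card_filter_val_lt_and_eq_add {n : ℕ} (P : Fin n → Prop) [DecidablePred P] {a b : ℕ}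
    (hab : a ≤ b) :
    #{y : Fin n | (y : ℕ) < b ∧ P y} =
      #{y : Fin n | (y : ℕ) < a ∧ P y} + #{y : Fin n | a ≤ (y : ℕ) ∧ (y : ℕ) < b ∧ P y} := by
  rw [← card_filter_add_card_filter_not (fun y : Fin n => (y : ℕ) < a), filter_filter,
    filter_filter]
  congr 2 <;> ext y <;> simp only [mem_filter, mem_univ, true_and] <;> grind

lemma card_filter_true_and_add_card_filter_false_and {ι : Type*} [Fintype ι] (w : ι → Bool)
    (P : ι → Prop) [DecidablePred P] :
    #{y | w y = true ∧ P y} + #{y | w y = false ∧ P y} = #{y | P y} := by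
  rw [← card_filter_add_card_filter_not (s := {y | P y}) (fun y => w y = true), filter_filter,
    filter_filter]
  simp only [Bool.not_eq_true, and_comm]

lemma card_filter_and_comp_eq_of_card_fiber_eq {ι ι' κ : Type*} [Fintype ι] [Fintype ι']
    [Fintype κ] [DecidableEq κ] {P : ι → Prop} [DecidablePred P] {g : ι → κ} {g' : ι' → κ}
    (h : ∀ k, #{y | P y ∧ g y = k} = #{c | g' c = k}) (Q : κ → Prop) [DecidablePred Q] :
    #{y | P y ∧ Q (g y)} = #{c | Q (g' c)} := by
  have h₁ := sum_card_fiberwise_eq_card_filter {y | P y} {k | Q k} g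
  have h₂ := sum_card_fiberwise_eq_card_filter univ {k | Q k} g'
  simp only [filter_filter, mem_filter, mem_univ, true_and] at h₁ h₂
  rw [← h₁, ← h₂]
  exact sum_congr rfl fun k _ => h k

lemma Finset.card_filter_orderEmbOfFin {α : Type*} [LinearOrder α] (s : Finset α) {k : ℕ}
    (h : #s = k) (P : α → Prop) [DecidablePred P] :
    #{c | P (s.orderEmbOfFin h c)} = #{y ∈ s | P y} := by
  conv_rhs => rw [← map_orderEmbOfFin_univ s h, filter_map, card_map]
  rfl

theorem Monotone.eq_of_card_fiber_eq {n : ℕ} {α : Type*} [LinearOrder α] {g h : Fin n → α}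
    (hg : Monotone g) (hh : Monotone h) (hc : ∀ k, #{c | g c = k} = #{c | h c = k}) :
    g = h := by
  have hmap : univ.val.map g = univ.val.map h := by
    ext k
    simp only [Multiset.count_map, eq_comm (a := k)]
    exact hc k
  rw [Fin.univ_val_map, Fin.univ_val_map, Multiset.coe_eq_coe] at hmap
  exact List.ofFn_injective (hmap.eq_of_sortedLE (by simpa) (by simpa))

end counting

section dyck

variable {n : ℕ}

def height (w : Fin n → Bool) (k : ℕ) : ℤ :=
  #{y : Fin n | (y : ℕ) < k ∧ w y = true} - #{y : Fin n | (y : ℕ) < k ∧ w y = false}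

def IsDyck (w : Fin n → Bool) : Prop :=
  (∀ k ≤ n, 0 ≤ height w k) ∧ height w n = 0

lemma height_zero (w : Fin n → Bool) : height w 0 = 0 := by
  simp [height]

lemma height_sub_height (w : Fin n → Bool) {a b : ℕ} (hab : a ≤ b) :
    height w b - height w a =
      #{y : Fin n | a ≤ (y : ℕ) ∧ (y : ℕ) < b ∧ w y = true} -
        #{y : Fin n | a ≤ (y : ℕ) ∧ (y : ℕ) < b ∧ w y = false} := by
  rw [height, height, Fin.card_filter_val_lt_and_eq_add _ hab,
    Fin.card_filter_val_lt_and_eq_add _ hab]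
  push_cast
  ring

lemma height_succ (w : Fin n → Bool) (x : Fin n) :
    height w (x + 1) = height w x + if w x then 1 else -1 := by
  have hx : ∀ b, ({y : Fin n | (x : ℕ) ≤ y ∧ (y : ℕ) < x + 1 ∧ w y = b} : Finset _) =
      ({x} : Finset (Fin n)).filter (w · = b) := by
    intro b
    ext y
    simp only [mem_filter, mem_univ, true_and, mem_singleton, Fin.ext_iff]
    grind
  have := height_sub_height w (Nat.le_succ x)
  rw [hx, hx, filter_singleton, filter_singleton] at this
  cases hwx : w x <;> simp [hwx] at this ⊢ <;> linarith

/-- The path of `w` leaves the level of `height w x` upwards at step `x` and first comes back to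
it with step `y`. -/
structure IsFirstReturn (w : Fin n → Bool) (x y : Fin n) : Prop where
  lt : x < y
  height_succ_eq : height w (y + 1) = height w x
  height_lt : ∀ t : ℕ, (x : ℕ) < t → t ≤ y → height w x < height w t

namespace IsFirstReturn

variable {w : Fin n → Bool} {x y : Fin n}

lemma fst_eq_true (h : IsFirstReturn w x y) : w x = true := by
  have := h.height_lt (x + 1) (by omega) h.lt
  rw [height_succ] at this
  cases hwx : w x <;> simp_all

lemma snd_eq_false (h : IsFirstReturn w x y) : w y = false := by
  have hlt := h.height_lt y h.lt le_rfl
  have hstep := height_succ w y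
  rw [h.height_succ_eq] at hstep
  cases hwy : w y <;> simp only [hwy, if_true] at hstep
  · rfl
  · omega

lemma right_unique {y' : Fin n} (h : IsFirstReturn w x y) (h' : IsFirstReturn w x y') :
    y = y' := by
  have key : ∀ {a b : Fin n}, IsFirstReturn w x a → IsFirstReturn w x b → ¬ b < a :=
    fun {a b} ha hb hba => by
      have := ha.height_lt (b + 1) (by have := hb.lt; omega) hba
      rw [hb.height_succ_eq] at this
      exact lt_irrefl _ this
  exact le_antisymm (not_lt.1 (key h h')) (not_lt.1 (key h' h))

lemma left_unique {x' : Fin n} (h : IsFirstReturn w x y) (h' : IsFirstReturn w x' y) :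
    x = x' := by
  have key : ∀ {a b : Fin n}, IsFirstReturn w a y → IsFirstReturn w b y → ¬ a < b :=
    fun {a b} ha hb hab => by
      have := ha.height_lt b hab hb.lt.le
      rw [← hb.height_succ_eq, ha.height_succ_eq] at this
      exact lt_irrefl _ this
  exact le_antisymm (not_lt.1 (key h' h)) (not_lt.1 (key h h'))

end IsFirstReturn

lemma exists_isFirstReturn_of_eq_true {w : Fin n → Bool} (hw : IsDyck w) {x : Fin n}
    (hx : w x = true) : ∃ y, IsFirstReturn w x y := by
  have hstep := height_succ w x
  rw [hx, if_pos rfl] at hstep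
  have hxn : (x : ℕ) + 1 < n := by
    by_contra h
    have hlast : (x : ℕ) + 1 = n := by omega
    have := hw.1 x x.isLt.le
    rw [hlast, hw.2] at hstep
    omega
  have hex : ∃ k : ℕ, (x : ℕ) + 1 < k ∧ height w k ≤ height w x :=
    ⟨n, hxn, hw.2 ▸ hw.1 x x.isLt.le⟩
  classical
  let k := Nat.find hex
  obtain ⟨hk₁, hk₂⟩ : (x : ℕ) + 1 < k ∧ height w k ≤ height w x := Nat.find_spec hex
  have hkn : k ≤ n := Nat.find_min' hex ⟨hxn, hw.2 ▸ hw.1 x x.isLt.le⟩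
  have above : ∀ t : ℕ, (x : ℕ) < t → t < k → height w x < height w t := by
    intro t ht₁ ht₂
    rcases (Nat.succ_le_of_lt ht₁).eq_or_lt with h | h
    · rw [← h, hstep]; omega
    · exact not_le.1 (not_and.1 (Nat.find_min hex ht₂) h)
  refine ⟨⟨k - 1, by omega⟩, ⟨Fin.mk_lt_mk.2 (by omega), ?_,
    fun t ht₁ ht₂ => above t ht₁ (by simp only at ht₂; omega)⟩⟩
  have h₁ := above (k - 1) (by omega) (by omega)
  have h₂ := height_succ w ⟨k - 1, by omega⟩
  simp only [show k - 1 + 1 = k by omega] at h₂ ⊢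
  split_ifs at h₂ <;> omega

lemma exists_isFirstReturn_of_eq_false {w : Fin n → Bool} (hw : IsDyck w) {y : Fin n}
    (hy : w y = false) : ∃ x, IsFirstReturn w x y := by
  have hstep := height_succ w y
  rw [hy] at hstep
  simp only [Bool.false_eq_true, if_false] at hstep
  let P : ℕ → Prop := fun x => height w x ≤ height w (y + 1)
  let x₀ := Nat.findGreatest P y
  have hx₀ : P x₀ := Nat.findGreatest_spec (Nat.zero_le _) <| by
    simp only [P, height_zero]; exact hw.1 _ y.isLt
  have above : ∀ t : ℕ, x₀ < t → t ≤ y → height w (y + 1) < height w t := fun t ht₁ ht₂ => by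
    simpa [P] using Nat.findGreatest_is_greatest ht₁ ht₂
  have hx₀y : x₀ ≤ y := Nat.findGreatest_le _
  have hlt : x₀ < y := by
    rcases hx₀y.lt_or_eq with h | h
    · exact h
    · simp only [P, h] at hx₀; omega
  have h₁ := above (x₀ + 1) (by omega) (by omega)
  have h₂ := height_succ w ⟨x₀, by omega⟩
  have heq : height w x₀ = height w (y + 1) := by
    simp only at h₂; split_ifs at h₂ <;> simp only [P] at hx₀ <;> omega
  refine ⟨⟨x₀, by omega⟩, ⟨Fin.mk_lt_mk.2 hlt, heq.symm, fun t ht₁ ht₂ => ?_⟩⟩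
  rw [heq]; exact above t ht₁ ht₂

end dyck

section dyckPairing

variable {n : ℕ}

open scoped Classical in
noncomputable def dyckPairing (w : Fin n → Bool) (x : Fin n) : Fin n :=
  if h : ∃ y, IsFirstReturn w x y ∨ IsFirstReturn w y x then h.choose else x

variable {w : Fin n → Bool}

lemma dyckPairing_eq {x y : Fin n} (h : IsFirstReturn w x y ∨ IsFirstReturn w y x) :
    dyckPairing w x = y := by
  have hex : ∃ y, IsFirstReturn w x y ∨ IsFirstReturn w y x := ⟨y, h⟩
  rw [dyckPairing, dif_pos hex]
  rcases hex.choose_spec with h₁ | h₁ <;> rcases h with h₂ | h₂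
  · exact h₁.right_unique h₂
  · exact absurd h₁.fst_eq_true (by simp [h₂.snd_eq_false])
  · exact absurd h₂.fst_eq_true (by simp [h₁.snd_eq_false])
  · exact h₁.left_unique h₂

lemma isFirstReturn_dyckPairing (hw : IsDyck w) (x : Fin n) :
    IsFirstReturn w x (dyckPairing w x) ∨ IsFirstReturn w (dyckPairing w x) x := by
  cases hx : w x
  · obtain ⟨y, hy⟩ := exists_isFirstReturn_of_eq_false hw hx
    rw [dyckPairing_eq (Or.inr hy)]
    exact Or.inr hy
  · obtain ⟨y, hy⟩ := exists_isFirstReturn_of_eq_true hw hx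
    rw [dyckPairing_eq (Or.inl hy)]
    exact Or.inl hy

lemma dyckPairing_involutive (hw : IsDyck w) : Function.Involutive (dyckPairing w) :=
  fun x => dyckPairing_eq (isFirstReturn_dyckPairing hw x).symm

lemma dyckPairing_ne (hw : IsDyck w) (x : Fin n) : dyckPairing w x ≠ x := by
  rcases isFirstReturn_dyckPairing hw x with h | h
  · exact h.lt.ne'
  · exact h.lt.ne

lemma lt_dyckPairing_iff (hw : IsDyck w) (x : Fin n) : x < dyckPairing w x ↔ w x = true := by
  rcases isFirstReturn_dyckPairing hw x with h | h
  · exact iff_of_true h.lt h.fst_eq_true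
  · exact iff_of_false (not_lt.2 h.lt.le) (by simp [h.snd_eq_false])

lemma dyckPairing_noncrossing (hw : IsDyck w) :
    ¬ ∃ a b : Fin n, a < b ∧ b < dyckPairing w a ∧ dyckPairing w a < dyckPairing w b := by
  rintro ⟨a, b, hab, hba, hab'⟩
  have ha : IsFirstReturn w a (dyckPairing w a) :=
    (isFirstReturn_dyckPairing hw a).resolve_right fun h => lt_asymm (hab.trans hba) h.lt
  have hb : IsFirstReturn w b (dyckPairing w b) :=
    (isFirstReturn_dyckPairing hw b).resolve_right fun h => lt_asymm (hba.trans hab') h.lt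
  have h₁ := ha.height_lt b hab hba.le
  have h₂ := hb.height_lt (dyckPairing w a + 1) (by omega) (by omega)
  rw [ha.height_succ_eq] at h₂
  exact lt_asymm h₁ h₂

end dyckPairing

section pairingWord

variable {n : ℕ}

def pairingWord (m : Fin n → Fin n) (x : Fin n) : Bool := decide (x < m x)

variable {m : Fin n → Fin n} (hm : Function.Involutive m) (hfix : ∀ x, m x ≠ x)
  (hnc : ¬ ∃ a b : Fin n, a < b ∧ b < m a ∧ m a < m b)

@[simp] lemma pairingWord_eq_true_iff {x : Fin n} : pairingWord m x = true ↔ x < m x := by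
  simp [pairingWord]

include hfix in
@[simp] lemma pairingWord_eq_false_iff {x : Fin n} : pairingWord m x = false ↔ m x < x := by
  rw [pairingWord, decide_eq_false_iff_not, not_lt, (hfix x).le_iff_lt]

lemma pairingWord_dyckPairing {w : Fin n → Bool} (hw : IsDyck w) :
    pairingWord (dyckPairing w) = w :=
  funext fun x => Bool.eq_iff_iff.2 (by rw [pairingWord_eq_true_iff, lt_dyckPairing_iff hw])

include hm hfix in
lemma isDyck_pairingWord : IsDyck (pairingWord m) := by
  have down_le_up : ∀ k : ℕ, #{y : Fin n | (y : ℕ) < k ∧ pairingWord m y = false} ≤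
      #{y : Fin n | (y : ℕ) < k ∧ pairingWord m y = true} := by
    intro k
    refine card_le_card_of_injOn m (fun y hy => ?_) hm.injective.injOn
    simp only [mem_coe, mem_filter, mem_univ, true_and, pairingWord_eq_true_iff,
      pairingWord_eq_false_iff hfix, hm y] at hy ⊢
    exact ⟨lt_trans (Fin.lt_def.1 hy.2) hy.1, hy.2⟩
  refine ⟨fun k _ => by simpa [height] using down_le_up k, ?_⟩
  have up_le_down : #{y : Fin n | (y : ℕ) < n ∧ pairingWord m y = true} ≤
      #{y : Fin n | (y : ℕ) < n ∧ pairingWord m y = false} := by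
    refine card_le_card_of_injOn m (fun y hy => ?_) hm.injective.injOn
    simp only [mem_coe, mem_filter, mem_univ, true_and, pairingWord_eq_true_iff,
      pairingWord_eq_false_iff hfix, hm y] at hy ⊢
    exact ⟨(m y).isLt, hy.2⟩
  have := down_le_up n
  simp only [height]
  omega

include hm hnc in
lemma lt_apply_and_apply_lt {x u : Fin n} (hxu : x < u) (hux : u < m x) :
    x < m u ∧ m u < m x := by
  refine ⟨lt_of_not_ge fun h => ?_, lt_of_not_ge fun h => ?_⟩
  · rcases h.lt_or_eq with h | h
    · exact hnc ⟨m u, x, h, by rwa [hm], by rwa [hm]⟩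
    · rw [← h, hm] at hux
      exact lt_irrefl _ hux
  · rcases h.lt_or_eq with h | h
    · exact hnc ⟨x, u, hxu, hux, h⟩
    · exact hxu.ne (hm.injective h)

include hm hnc in
lemma apply_mem_Icc {x y : Fin n} (hx : x < m x) (hy : y ∈ Set.Icc x (m x)) :
    m y ∈ Set.Icc x (m x) := by
  rcases hy.1.lt_or_eq with hxy | rfl
  · rcases hy.2.lt_or_eq with hyx | rfl
    · exact (lt_apply_and_apply_lt hm hnc hxy hyx).imp le_of_lt le_of_lt
    · rw [hm]; exact ⟨le_rfl, hx.le⟩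
  · exact ⟨hx.le, le_rfl⟩

include hm hfix hnc in
lemma height_pairingWord_apply_succ {x : Fin n} (hx : x < m x) :
    height (pairingWord m) (m x + 1) = height (pairingWord m) x := by
  have hI : ∀ y : Fin n, ((x : ℕ) ≤ y ∧ (y : ℕ) < m x + 1) ↔ y ∈ Set.Icc x (m x) := fun y => by
    simp only [Set.mem_Icc, Fin.le_def]; omega
  have hswap : ∀ b : Bool,
      #{y : Fin n | (x : ℕ) ≤ y ∧ (y : ℕ) < m x + 1 ∧ pairingWord m y = b} ≤
        #{y : Fin n | (x : ℕ) ≤ y ∧ (y : ℕ) < m x + 1 ∧ pairingWord m y = !b} := by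
    intro b
    refine card_le_card_of_injOn m (fun y hy => ?_) hm.injective.injOn
    simp only [mem_coe, mem_filter, mem_univ, true_and, ← and_assoc, hI] at hy ⊢
    refine ⟨apply_mem_Icc hm hnc hx hy.1, ?_⟩
    cases b <;> simp_all [hm y]
  have h₁ := hswap true
  have h₂ := hswap false
  have := height_sub_height (pairingWord m) (show (x : ℕ) ≤ m x + 1 by omega)
  simp only [Bool.not_true, Bool.not_false] at h₁ h₂
  omega

include hm hfix hnc in
lemma height_lt_height_pairingWord {x : Fin n} (hx : x < m x) {t : ℕ} (hxt : (x : ℕ) < t)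
    (htx : t ≤ m x) : height (pairingWord m) x < height (pairingWord m) t := by
  have hsub := height_sub_height (pairingWord m) hxt.le
  set ups : Finset (Fin n) := {y | (x : ℕ) ≤ y ∧ (y : ℕ) < t ∧ pairingWord m y = true}
  have hxmem : x ∈ ups := by simp [ups, hx, hxt]
  have hdown : #{y : Fin n | (x : ℕ) ≤ y ∧ (y : ℕ) < t ∧ pairingWord m y = false} ≤
      #(ups.erase x) := by
    refine card_le_card_of_injOn m (fun y hy => ?_) hm.injective.injOn
    simp only [ups, mem_coe, mem_filter, mem_univ, true_and, mem_erase,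
      pairingWord_eq_false_iff hfix, pairingWord_eq_true_iff, hm y] at hy ⊢
    have hxy : x < y := lt_of_le_of_ne (Fin.le_def.2 hy.1) fun h => by
      subst h; exact lt_asymm hx hy.2.2
    have hxmy := (lt_apply_and_apply_lt hm hnc hxy (Fin.lt_def.2 (by omega))).1
    have := Fin.lt_def.1 hy.2.2
    exact ⟨hxmy.ne', Fin.le_def.1 hxmy.le, by omega, hy.2.2⟩
  rw [card_erase_of_mem hxmem] at hdown
  have : 0 < #ups := card_pos.2 ⟨x, hxmem⟩
  omega

include hm hfix hnc in
lemma isFirstReturn_pairingWord {x : Fin n} (hx : x < m x) :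
    IsFirstReturn (pairingWord m) x (m x) :=
  ⟨hx, height_pairingWord_apply_succ hm hfix hnc hx,
    fun _ => height_lt_height_pairingWord hm hfix hnc hx⟩

include hm hfix hnc in
lemma dyckPairing_pairingWord : dyckPairing (pairingWord m) = m := by
  funext x
  rcases (hfix x).lt_or_gt with hx | hx
  · have := isFirstReturn_pairingWord hm hfix hnc (x := m x) (by rwa [hm])
    rw [hm] at this
    exact dyckPairing_eq (Or.inr this)
  · exact dyckPairing_eq (Or.inl (isFirstReturn_pairingWord hm hfix hnc hx))

include hm hfix hnc in
lemma monotoneOn_fibers_pairingWord_iff {α : Type*} [PartialOrder α] {f : Fin n → α}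
    (hf : Monotone f) :
    (∀ k, MonotoneOn (pairingWord m) (f ⁻¹' {k})) ↔ ∀ x, f (m x) ≠ f x := by
  have same_fiber : ∀ {s t u : Fin n}, f s = f t → s ≤ u → u ≤ t → f u = f s :=
    fun hst hsu hut => le_antisymm (hst ▸ hf hut) (hf hsu)
  constructor
  · intro hmono x hx
    wlog hlt : x < m x generalizing x
    · exact this (m x) (by rw [hm, hx]) (by rw [hm]; exact lt_of_le_of_ne (not_lt.1 hlt) (hfix x))
    have := hmono (f x) rfl hx hlt.le
    rw [pairingWord_eq_true_iff.2 hlt,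
      (pairingWord_eq_false_iff hfix).2 (by rwa [hm] : m (m x) < m x)] at this
    exact Bool.false_lt_true.not_ge this
  · intro hsep k s hs t ht hst
    refine Bool.le_iff_imp.2 fun hsm => ?_
    rw [pairingWord_eq_true_iff] at hsm ⊢
    by_contra htm
    replace htm := lt_of_le_of_ne (not_lt.1 htm) (hfix t)
    have hfst : f s = f t := hs.trans ht.symm
    have hts : t < m s := lt_of_not_ge fun h => hsep s (same_fiber hfst hsm.le h)
    have hst' : m t < s := lt_of_not_ge fun h => hsep t ((same_fiber hfst h htm.le).trans hfst)
    have hst : s < t := lt_of_le_of_ne hst fun h => by subst h; exact lt_asymm hsm htm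
    exact hnc ⟨m t, s, hst', by rwa [hm], by rwa [hm]⟩

end pairingWord

noncomputable def noncrossingPairingEquiv {n : ℕ} {α : Type*} [PartialOrder α] {f : Fin n → α}
    (hf : Monotone f) :
    {m : Fin n → Fin n // (∀ x, m (m x) = x) ∧ (∀ x, m x ≠ x) ∧
        (¬ ∃ a b : Fin n, a < b ∧ b < m a ∧ m a < m b) ∧ (∀ x, f (m x) ≠ f x)} ≃
      {w : Fin n → Bool // IsDyck w ∧ ∀ k, MonotoneOn w (f ⁻¹' {k})} where
  toFun m := ⟨pairingWord m.1, isDyck_pairingWord m.2.1 m.2.2.1,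
    (monotoneOn_fibers_pairingWord_iff m.2.1 m.2.2.1 m.2.2.2.1 hf).2 m.2.2.2.2⟩
  invFun w := ⟨dyckPairing w.1, dyckPairing_involutive w.2.1, dyckPairing_ne w.2.1,
    dyckPairing_noncrossing w.2.1,
    (monotoneOn_fibers_pairingWord_iff (dyckPairing_involutive w.2.1) (dyckPairing_ne w.2.1)
      (dyckPairing_noncrossing w.2.1) hf).1 (by rw [pairingWord_dyckPairing w.2.1]; exact w.2.2)⟩
  left_inv m := Subtype.ext (dyckPairing_pairingWord m.2.1 m.2.2.1 m.2.2.2.1)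
  right_inv w := Subtype.ext (pairingWord_dyckPairing w.2.1)

section blocks

variable {p : ℕ} (r : Fin p → ℕ)

def blockStart (k : Fin p) : ℕ :=
  ∑ i ∈ univ.filter (· < k), r i

/-- `f x` is the block of `1̂_r` containing `x`. -/
def IsBlockFun {n : ℕ} (f : Fin n → Fin p) : Prop :=
  ∀ x k, f x = k ↔ blockStart r k ≤ x ∧ x < blockStart r k + r k

lemma sum_filter_le_eq_blockStart_add (k : Fin p) :
    ∑ i ∈ univ.filter (· ≤ k), r i = blockStart r k + r k := by
  have : univ.filter (· ≤ k) = insert k (univ.filter (· < k)) := by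
    ext i; simp [le_iff_lt_or_eq, or_comm]
  rw [this, sum_insert (by simp), blockStart, add_comm]

lemma blockStart_add_le_blockStart {j k : Fin p} (h : j < k) :
    blockStart r j + r j ≤ blockStart r k := by
  rw [← sum_filter_le_eq_blockStart_add]
  exact sum_le_sum_of_subset fun i => by
    simp only [mem_filter, mem_univ, true_and]
    exact fun hi => hi.trans_lt h

lemma blockStart_add_le_sum (k : Fin p) : blockStart r k + r k ≤ ∑ i, r i := by
  rw [← sum_filter_le_eq_blockStart_add]
  exact sum_le_sum_of_subset (subset_univ _)

namespace IsBlockFun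

variable {r} {n : ℕ} {f : Fin n → Fin p} (hf : IsBlockFun r f)
include hf

lemma blockStart_le (x : Fin n) : blockStart r (f x) ≤ x := ((hf x _).1 rfl).1

lemma lt_blockStart_add (x : Fin n) : x < blockStart r (f x) + r (f x) := ((hf x _).1 rfl).2

lemma monotone : Monotone f := fun x y hxy => not_lt.1 fun h => by
  have := blockStart_add_le_blockStart r h
  have := hf.blockStart_le x
  have := hf.lt_blockStart_add y
  have : (x : ℕ) ≤ y := hxy
  omega

lemma card_fiber (hn : ∑ i, r i ≤ n) (k : Fin p) : #{y | f y = k} = r k := by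
  have := blockStart_add_le_sum r k
  rw [filter_congr fun y _ => hf y k, Fin.card_filter_le_val_and_val_lt (by omega)]
  omega

end IsBlockFun

end blocks

section blockWord

variable {p n : ℕ} {r : Fin p → ℕ} {f : Fin n → Fin p}

def blockWord (r : Fin p → ℕ) (f : Fin n → Fin p) (b : Fin p → ℕ) (x : Fin n) : Bool :=
  decide (blockStart r (f x) + b (f x) ≤ x)

lemma monotoneOn_blockWord (b : Fin p → ℕ) (k : Fin p) :
    MonotoneOn (blockWord r f b) (f ⁻¹' {k}) := by
  intro s hs t ht hst
  simp only [Set.mem_preimage, Set.mem_singleton_iff] at hs ht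
  simp only [blockWord, hs, ht, Bool.le_iff_imp, decide_eq_true_eq]
  exact fun h => h.trans hst

variable (hf : IsBlockFun r f) (hn : ∑ i, r i ≤ n)
include hf hn

lemma card_blockWord_eq_false {b : Fin p → ℕ} {k : Fin p} (hb : b k ≤ r k) :
    #{y | blockWord r f b y = false ∧ f y = k} = b k := by
  have hset : ({y | blockWord r f b y = false ∧ f y = k} : Finset (Fin n)) =
      ({y : Fin n | blockStart r k ≤ (y : ℕ) ∧ (y : ℕ) < blockStart r k + b k} : Finset _) := by
    ext y
    simp only [mem_filter, mem_univ, true_and, blockWord, decide_eq_false_iff_not, not_le]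
    constructor
    · rintro ⟨h, rfl⟩
      exact ⟨hf.blockStart_le y, h⟩
    · rintro ⟨h₁, h₂⟩
      obtain rfl : f y = k := (hf y k).2 ⟨h₁, by omega⟩
      exact ⟨h₂, rfl⟩
  have := blockStart_add_le_sum r k
  rw [hset, Fin.card_filter_le_val_and_val_lt (by omega)]
  omega

lemma card_blockWord_eq_true {b : Fin p → ℕ} {k : Fin p} (hb : b k ≤ r k) :
    #{y | blockWord r f b y = true ∧ f y = k} = r k - b k := by
  have hset : ({y | blockWord r f b y = true ∧ f y = k} : Finset (Fin n)) =
      ({y : Fin n | blockStart r k + b k ≤ (y : ℕ) ∧ (y : ℕ) < blockStart r k + r k} :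
        Finset _) := by
    ext y
    simp only [mem_filter, mem_univ, true_and, blockWord, decide_eq_true_eq]
    constructor
    · rintro ⟨h, rfl⟩
      exact ⟨h, hf.lt_blockStart_add y⟩
    · rintro ⟨h₁, h₂⟩
      obtain rfl : f y = k := (hf y k).2 ⟨by omega, h₂⟩
      exact ⟨h₁, rfl⟩
  have := blockStart_add_le_sum r k
  rw [hset, Fin.card_filter_le_val_and_val_lt (by omega)]
  omega

lemma blockWord_card_eq_false {w : Fin n → Bool} (hw : ∀ k, MonotoneOn w (f ⁻¹' {k})) :
    blockWord r f (fun k => #{y | w y = false ∧ f y = k}) = w := by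
  funext x
  have hrk := blockStart_add_le_sum r (f x)
  have hsplit := card_filter_true_and_add_card_filter_false_and w (f · = f x)
  rw [hf.card_fiber hn] at hsplit
  have hx₁ := hf.blockStart_le x
  have hx₂ := hf.lt_blockStart_add x
  have mem_fiber : ∀ y : Fin n, blockStart r (f x) ≤ y →
      (y : ℕ) < blockStart r (f x) + r (f x) → y ∈ f ⁻¹' {f x} :=
    fun y h₁ h₂ => (hf y (f x)).2 ⟨h₁, h₂⟩
  cases hwx : w x
  · have hsub : ({y : Fin n | blockStart r (f x) ≤ (y : ℕ) ∧ (y : ℕ) < x + 1} : Finset _) ⊆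
        ({y | w y = false ∧ f y = f x} : Finset _) := fun y hy => by
      simp only [mem_filter, mem_univ, true_and] at hy ⊢
      refine ⟨?_, mem_fiber y hy.1 (by omega)⟩
      have := hw (f x) (mem_fiber y hy.1 (by omega)) (mem_fiber x hx₁ hx₂)
        (Fin.le_def.2 (by omega))
      simpa [hwx, Bool.le_iff_imp] using this
    have := card_le_card hsub
    rw [Fin.card_filter_le_val_and_val_lt (by omega)] at this
    simp only [blockWord, decide_eq_false_iff_not, not_le]
    omega
  · have hsub : ({y : Fin n | (x : ℕ) ≤ y ∧ (y : ℕ) < blockStart r (f x) + r (f x)} :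
        Finset _) ⊆ ({y | w y = true ∧ f y = f x} : Finset _) := fun y hy => by
      simp only [mem_filter, mem_univ, true_and] at hy ⊢
      refine ⟨?_, mem_fiber y (by omega) hy.2⟩
      have := hw (f x) (mem_fiber x hx₁ hx₂) (mem_fiber y (by omega) hy.2) (Fin.le_def.2 hy.1)
      simpa [hwx, Bool.le_iff_imp] using this
    have := card_le_card hsub
    rw [Fin.card_filter_le_val_and_val_lt (by omega)] at this
    simp only [blockWord, decide_eq_true_eq]
    omega

end blockWord

lemma card_cells_eq_add {N p : ℕ} (T : Fin 2 → Fin N → Fin p) (k : Fin p) :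
    #{rc : Fin 2 × Fin N | T rc.1 rc.2 = k} = #{c | T 0 c = k} + #{c | T 1 c = k} := by
  rw [card_filter, Fintype.sum_prod_type, Fin.sum_univ_two, card_filter, card_filter]

section tableauWord

variable {p N : ℕ} {r : Fin p → ℕ} {f : Fin (2 * N) → Fin p} (hf : IsBlockFun r f)
  (hn : ∑ i, r i ≤ 2 * N) {T : Fin 2 → Fin N → Fin p}
  (hwt : ∀ k, #{rc : Fin 2 × Fin N | T rc.1 rc.2 = k} = r k)
include hf hn hwt

lemma card_blockWord_tableau_eq_true (k : Fin p) :
    #{y | blockWord r f (fun k => #{c | T 1 c = k}) y = true ∧ f y = k} = #{c | T 0 c = k} := by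
  have := card_cells_eq_add T k ▸ hwt k
  rw [card_blockWord_eq_true hf hn (by omega)]
  omega

lemma card_blockWord_tableau_eq_false (k : Fin p) :
    #{y | blockWord r f (fun k => #{c | T 1 c = k}) y = false ∧ f y = k} = #{c | T 1 c = k} := by
  have := card_cells_eq_add T k ▸ hwt k
  exact card_blockWord_eq_false hf hn (by omega)

lemma isDyck_blockWord_of_tableau (hcol : ∀ c, T 0 c < T 1 c) :
    IsDyck (blockWord r f fun k => #{c | T 1 c = k}) := by
  set w := blockWord r f fun k => #{c | T 1 c = k}
  have hup : ∀ Q : Fin p → Prop, ∀ [DecidablePred Q],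
      #{y | w y = true ∧ Q (f y)} = #{c | Q (T 0 c)} :=
    card_filter_and_comp_eq_of_card_fiber_eq (card_blockWord_tableau_eq_true hf hn hwt)
  have hdown : ∀ Q : Fin p → Prop, ∀ [DecidablePred Q],
      #{y | w y = false ∧ Q (f y)} = #{c | Q (T 1 c)} :=
    card_filter_and_comp_eq_of_card_fiber_eq (card_blockWord_tableau_eq_false hf hn hwt)
  have htotal : height w (2 * N) = 0 := by
    have h₁ := hup fun _ => True
    have h₂ := hdown fun _ => True
    simp only [and_true, filter_true, card_univ, Fintype.card_fin] at h₁ h₂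
    simp only [height, Fin.is_lt, true_and, h₁, h₂, sub_self]
  refine ⟨fun x hx => ?_, htotal⟩
  rcases hx.lt_or_eq with hx | rfl
  swap
  · rw [htotal]
  set k := f ⟨x, hx⟩
  have h₁ : #{c | T 0 c < k} ≤ #{y : Fin (2 * N) | (y : ℕ) < x ∧ w y = true} := by
    rw [← hup (· < k)]
    refine card_le_card fun y => ?_
    simp only [mem_filter, mem_univ, true_and]
    rintro ⟨hy, hyk⟩
    have := hf.lt_blockStart_add y
    have := blockStart_add_le_blockStart r hyk
    have : blockStart r k ≤ x := hf.blockStart_le ⟨x, hx⟩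
    exact ⟨by omega, hy⟩
  have h₂ : #{y : Fin (2 * N) | (y : ℕ) < x ∧ w y = false} ≤ #{c | T 1 c ≤ k} := by
    rw [← hdown (· ≤ k)]
    refine card_le_card fun y => ?_
    simp only [mem_filter, mem_univ, true_and]
    rintro ⟨hy, hyw⟩
    exact ⟨hyw, hf.monotone (Fin.le_def.2 hy.le)⟩
  have h₃ : #{c | T 1 c ≤ k} ≤ #{c | T 0 c < k} := card_le_card fun c => by
    simp only [mem_filter, mem_univ, true_and]
    exact (hcol c).trans_le
  simp only [height]
  omega

end tableauWord

namespace IsDyck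

variable {N : ℕ} {w : Fin (2 * N) → Bool} (hw : IsDyck w)
include hw

lemma card_filter_eq (v : Bool) : #{y | w y = v} = N := by
  have htotal := hw.2
  have hsplit := card_filter_add_card_filter_not (s := univ) (fun y => w y = true)
  simp only [height, Fin.is_lt, true_and, Bool.not_eq_true, card_univ, Fintype.card_fin]
    at htotal hsplit
  cases v <;> omega

noncomputable def nthStep (v : Bool) : Fin N ↪o Fin (2 * N) :=
  ({y | w y = v} : Finset _).orderEmbOfFin (hw.card_filter_eq v)

lemma nthStep_apply (v : Bool) (c : Fin N) : w (hw.nthStep v c) = v :=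
  (mem_filter.1 (orderEmbOfFin_mem ({y | w y = v} : Finset _) (hw.card_filter_eq v) c)).2

lemma card_filter_nthStep (v : Bool) (P : Fin (2 * N) → Prop) [DecidablePred P] :
    #{c | P (hw.nthStep v c)} = #{y | w y = v ∧ P y} := by
  rw [nthStep, Finset.card_filter_orderEmbOfFin, filter_filter]

lemma card_filter_lt_nthStep (v : Bool) (c : Fin N) :
    #{y | w y = v ∧ y < hw.nthStep v c} = c := by
  rw [← hw.card_filter_nthStep, ← Fin.card_Iio c]
  congr 1
  ext c'
  simp

lemma nthStep_true_lt_nthStep_false (c : Fin N) : hw.nthStep true c < hw.nthStep false c := by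
  set d := hw.nthStep false c
  have hd := height_succ w d
  rw [hw.nthStep_apply, if_neg Bool.false_ne_true] at hd
  have hpos := hw.1 (d + 1) d.isLt
  have hdown : #{y : Fin (2 * N) | (y : ℕ) < d ∧ w y = false} = c := by
    rw [← hw.card_filter_lt_nthStep false c]
    congr 1; ext y; simp [and_comm, d]
  -- the height just before the `c`-th down-step is positive
  have hup : c < #{y | w y = true ∧ y < d} := by
    have : #{y : Fin (2 * N) | (y : ℕ) < d ∧ w y = true} = #{y | w y = true ∧ y < d} := by
      congr 1; ext y; simp [and_comm]
    have hheight : height w d = #{y : Fin (2 * N) | (y : ℕ) < d ∧ w y = true} -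
        #{y : Fin (2 * N) | (y : ℕ) < d ∧ w y = false} := rfl
    omega
  by_contra! hle
  have := card_le_card (s := {y | w y = true ∧ y < d})
    (t := {y | w y = true ∧ y < hw.nthStep true c}) fun y => by
      simp only [mem_filter, mem_univ, true_and]
      exact fun h => ⟨h.1, h.2.trans_le hle⟩
  rw [hw.card_filter_lt_nthStep] at this
  omega

end IsDyck

section dyckTableau

variable {p N : ℕ} {r : Fin p → ℕ} {f : Fin (2 * N) → Fin p}

noncomputable def dyckTableau (f : Fin (2 * N) → Fin p) {w : Fin (2 * N) → Bool}
    (hw : IsDyck w) : Fin 2 → Fin N → Fin p :=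
  ![f ∘ hw.nthStep true, f ∘ hw.nthStep false]

lemma card_filter_dyckTableau_eq {w : Fin (2 * N) → Bool} (hw : IsDyck w) (i : Fin 2)
    (k : Fin p) : #{c | dyckTableau f hw i c = k} = #{y | w y = decide (i = 0) ∧ f y = k} := by
  fin_cases i
  · exact hw.card_filter_nthStep true (f · = k)
  · exact hw.card_filter_nthStep false (f · = k)

variable (hf : IsBlockFun r f)
include hf

lemma monotone_dyckTableau {w : Fin (2 * N) → Bool} (hw : IsDyck w) (i : Fin 2) :
    Monotone (dyckTableau f hw i) := by
  fin_cases i <;> exact hf.monotone.comp (OrderEmbedding.monotone _)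

lemma dyckTableau_zero_lt_one {w : Fin (2 * N) → Bool} (hw : IsDyck w)
    (hmono : ∀ k, MonotoneOn w (f ⁻¹' {k})) (c : Fin N) :
    dyckTableau f hw 0 c < dyckTableau f hw 1 c := by
  simp only [dyckTableau, Matrix.cons_val_zero, Matrix.cons_val_one, Function.comp_apply]
  have hlt := hw.nthStep_true_lt_nthStep_false c
  refine lt_of_le_of_ne (hf.monotone hlt.le) fun heq => ?_
  have := hmono _ rfl heq.symm hlt.le
  rw [hw.nthStep_apply, hw.nthStep_apply] at this
  exact absurd this (by decide)

variable (hn : ∑ i, r i ≤ 2 * N)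
include hn

lemma card_cells_dyckTableau {w : Fin (2 * N) → Bool} (hw : IsDyck w) (k : Fin p) :
    #{rc : Fin 2 × Fin N | dyckTableau f hw rc.1 rc.2 = k} = r k := by
  rw [card_cells_eq_add, card_filter_dyckTableau_eq, card_filter_dyckTableau_eq]
  exact (card_filter_true_and_add_card_filter_false_and w _).trans (hf.card_fiber hn k)

lemma blockWord_dyckTableau {w : Fin (2 * N) → Bool} (hw : IsDyck w)
    (hmono : ∀ k, MonotoneOn w (f ⁻¹' {k})) :
    blockWord r f (fun k => #{c | dyckTableau f hw 1 c = k}) = w := by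
  simp only [card_filter_dyckTableau_eq]
  exact blockWord_card_eq_false hf hn hmono

lemma dyckTableau_blockWord {T : Fin 2 → Fin N → Fin p} (hrow : ∀ i, Monotone (T i))
    (hwt : ∀ k, #{rc : Fin 2 × Fin N | T rc.1 rc.2 = k} = r k)
    (hw : IsDyck (blockWord r f fun k => #{c | T 1 c = k})) :
    dyckTableau f hw = T := by
  funext i
  fin_cases i
  · refine Monotone.eq_of_card_fiber_eq (monotone_dyckTableau hf hw 0) (hrow 0) fun k => ?_
    rw [card_filter_dyckTableau_eq]
    exact card_blockWord_tableau_eq_true hf hn hwt k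
  · refine Monotone.eq_of_card_fiber_eq (monotone_dyckTableau hf hw 1) (hrow 1) fun k => ?_
    rw [card_filter_dyckTableau_eq]
    exact card_blockWord_tableau_eq_false hf hn hwt k

end dyckTableau

noncomputable def tableauEquiv {p N : ℕ} {r : Fin p → ℕ} {f : Fin (2 * N) → Fin p}
    (hf : IsBlockFun r f) (hn : ∑ i, r i ≤ 2 * N) :
    {T : Fin 2 → Fin N → Fin p // (∀ i : Fin 2, Monotone (T i)) ∧ (∀ c : Fin N, T 0 c < T 1 c) ∧
        (∀ k : Fin p, #{rc : Fin 2 × Fin N | T rc.1 rc.2 = k} = r k)} ≃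
      {w : Fin (2 * N) → Bool // IsDyck w ∧ ∀ k, MonotoneOn w (f ⁻¹' {k})} where
  toFun T := ⟨blockWord r f fun k => #{c | T.1 1 c = k},
    isDyck_blockWord_of_tableau hf hn T.2.2.2 T.2.2.1, monotoneOn_blockWord _⟩
  invFun w := ⟨dyckTableau f w.2.1, monotone_dyckTableau hf w.2.1,
    dyckTableau_zero_lt_one hf w.2.1 w.2.2, card_cells_dyckTableau hf hn w.2.1⟩
  left_inv T := Subtype.ext (dyckTableau_blockWord hf hn T.2.1 T.2.2.2 _)
  right_inv w := Subtype.ext (blockWord_dyckTableau hf hn w.2.1 w.2.2)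

theorem ssyt_card_eq_nc2_card_general (p N : ℕ) (r : Fin p → ℕ)
    (hN : 2 * N = ∑ i, r i) (f : Fin (2 * N) → Fin p)
    (hf : ∀ (x : Fin (2 * N)) (k : Fin p), f x = k ↔
      (∑ i ∈ Finset.univ.filter (fun i => i < k), r i) ≤ (x : ℕ) ∧
        (x : ℕ) < ∑ i ∈ Finset.univ.filter (fun i => i ≤ k), r i) :
    Nat.card {T : Fin 2 → Fin N → Fin p //
        (∀ i : Fin 2, Monotone (T i)) ∧
        (∀ c : Fin N, T 0 c < T 1 c) ∧
        (∀ k : Fin p,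
          (Finset.univ.filter (fun rc : Fin 2 × Fin N => T rc.1 rc.2 = k)).card = r k)}
      = Nat.card {m : Fin (2 * N) → Fin (2 * N) //
          (∀ x, m (m x) = x) ∧ (∀ x, m x ≠ x) ∧
          (¬ ∃ a b : Fin (2 * N), a < b ∧ b < m a ∧ m a < m b) ∧
          (∀ x, f (m x) ≠ f x)} := by
  have hblocks : IsBlockFun r f := fun x k => by
    rw [hf, sum_filter_le_eq_blockStart_add]
    rfl
  exact Nat.card_congr ((tableauEquiv hblocks hN.ge).trans
    (noncrossingPairingEquiv hblocks.monotone).symm)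

/-- For an integer vector `r = (r₁,…,r_p)` of positive integers with `|r|` even,
the number of semi-standard Young tableaux of rectangular shape
`(|r|/2, |r|/2)` (2 rows, `|r|/2` columns) and weight `r` (rows weakly
increasing, columns strictly increasing, `rᵢ` entries equal to `i`) equals
`#NC₂(r)`, the number of non-crossing pairings of `{1,…,|r|}` pairing no two
elements within the same block of `1̂_r`.  Here `|r| = 2 * N`, tableaux are
functions `Fin 2 → Fin N → Fin p`, pairings are fixed-point-free involutions
`m` of `Fin (2*N)`, and `f` is the block function of `1̂_r`. -/
theorem ssyt_card_eq_nc2_card (p N : ℕ) (r : Fin p → ℕ) (hr : ∀ i, 1 ≤ r i)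
    (hN : 2 * N = ∑ i, r i) (f : Fin (2 * N) → Fin p)
    (hf : ∀ (x : Fin (2 * N)) (k : Fin p), f x = k ↔
      (∑ i ∈ Finset.univ.filter (fun i => i < k), r i) ≤ (x : ℕ) ∧
        (x : ℕ) < ∑ i ∈ Finset.univ.filter (fun i => i ≤ k), r i) :
    Nat.card {T : Fin 2 → Fin N → Fin p //
        (∀ i : Fin 2, Monotone (T i)) ∧
        (∀ c : Fin N, T 0 c < T 1 c) ∧
        (∀ k : Fin p,
          (Finset.univ.filter (fun rc : Fin 2 × Fin N => T rc.1 rc.2 = k)).card = r k)}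
      = Nat.card {m : Fin (2 * N) → Fin (2 * N) //
          (∀ x, m (m x) = x) ∧ (∀ x, m x ≠ x) ∧
          (¬ ∃ a b : Fin (2 * N), a < b ∧ b < m a ∧ m a < m b) ∧
          (∀ x, f (m x) ≠ f x)} :=
  ssyt_card_eq_nc2_card_general p N r hN f hf
end

section
/- Let n, r ≥ 1 and t > 0, and consider the formal linear combinations L_r(n,t) = n^{−r/2} Σ {a₁,...,a_r} in the group algebra ℂ[𝒢] of the group 𝒢 of finite subsets of ℕ under symmetric difference, where the sum runs over r-tuples of pairwise distinct integers in [1, ⌊nt⌋]. Then L_r(n,t)·L₁(n,t) = L_{r+1}(n,t) + ((⌊nt⌋ − r + 1)/n)·r·L_{r−1}(n,t), where L₀(n,t) is the identity element (the class of the empty set). -/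
/-- The group `𝒢` of finite subsets of `ℕ` under symmetric difference. -/
instance : CommGroup (Finset ℕ) where
  mul A B := symmDiff A B
  one := (∅ : Finset ℕ)
  inv A := A
  mul_assoc := symmDiff_assoc
  one_mul a := bot_symmDiff a
  mul_one a := symmDiff_bot a
  inv_mul_cancel a := symmDiff_self a
  mul_comm := symmDiff_comm

/-- `L r (n, t) = n^{-r/2} Σ {a₁,…,a_r}` in the group algebra `ℂ[𝒢]`, the sum
running over `r`-tuples of pairwise distinct integers of `[1, ⌊nt⌋]`. -/
noncomputable def L (n : ℕ) (t : ℝ) (r : ℕ) : MonoidAlgebra ℂ (Finset ℕ) :=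
  ((Real.sqrt n : ℂ))⁻¹ ^ r •
    ∑ a ∈ (Fintype.piFinset fun _ : Fin r =>
        Finset.Icc 1 (Nat.floor ((n : ℝ) * t))).filter (fun a => Function.Injective a),
      MonoidAlgebra.single (Finset.image a Finset.univ) (1 : ℂ)

lemma finset_mul_def (A B : Finset ℕ) : A * B = symmDiff A B := rfl

lemma symmDiff_singleton_mem {A : Finset ℕ} {b : ℕ} (h : b ∈ A) :
    symmDiff A {b} = A.erase b := by
  ext x
  simp only [Finset.mem_symmDiff, Finset.mem_singleton, Finset.mem_erase]
  constructor
  · rintro (⟨hx, hne⟩ | ⟨rfl, hx⟩)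
    · exact ⟨hne, hx⟩
    · exact absurd h hx
  · rintro ⟨hne, hx⟩; exact Or.inl ⟨hx, hne⟩

lemma symmDiff_singleton_not_mem {A : Finset ℕ} {b : ℕ} (h : b ∉ A) :
    symmDiff A {b} = insert b A := by
  ext x
  simp only [Finset.mem_symmDiff, Finset.mem_singleton, Finset.mem_insert]
  constructor
  · rintro (⟨hx, _⟩ | ⟨rfl, _⟩)
    · exact Or.inr hx
    · exact Or.inl rfl
  · rintro (rfl | hx)
    · exact Or.inr ⟨rfl, h⟩
    · exact Or.inl ⟨hx, fun hxb => h (hxb ▸ hx)⟩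

/-- The number of injective tuples with a given image of size `r` is `r!`. -/
lemma card_fiber (S : Finset ℕ) (r : ℕ) (A : Finset ℕ) (hA : A ∈ S.powersetCard r) :
    ((((Fintype.piFinset fun _ : Fin r => S).filter
          (fun a => Function.Injective a))).filter
       (fun a => Finset.image a Finset.univ = A)).card = r.factorial := by
  rw [Finset.mem_powersetCard] at hA
  obtain ⟨hAS, hcard⟩ := hA
  have key : ((((Fintype.piFinset fun _ : Fin r => S).filter
          (fun a => Function.Injective a))).filter
       (fun a => Finset.image a Finset.univ = A)).card
      = (Finset.univ : Finset (Fin r ↪ {x // x ∈ A})).card := by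
    refine Finset.card_bij' (fun a ha => ⟨fun k => ⟨a k, ?_⟩, ?_⟩)
      (fun e _ => fun k => (e k : ℕ)) ?_ ?_ ?_ ?_
    · simp only [Finset.mem_filter] at ha
      rw [← ha.2]
      exact Finset.mem_image.2 ⟨k, Finset.mem_univ k, rfl⟩
    · intro k₁ k₂ h
      simp only [Finset.mem_filter] at ha
      exact ha.1.2 (congrArg Subtype.val h)
    · intro a ha; exact Finset.mem_univ _
    · intro e _
      simp only [Finset.mem_filter]
      have hinj : Function.Injective (fun k => ((e k : ℕ))) := fun k₁ k₂ h =>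
        e.injective (Subtype.ext h)
      refine ⟨⟨?_, hinj⟩, ?_⟩
      · refine Fintype.mem_piFinset.2 fun k => hAS (e k).2
      · apply Finset.eq_of_subset_of_card_le
        · intro x hx
          obtain ⟨k, _, rfl⟩ := Finset.mem_image.1 hx
          exact (e k).2
        · rw [Finset.card_image_of_injective _ hinj, Finset.card_univ,
            Fintype.card_fin, hcard]
    · intro a ha; rfl
    · intro e _; ext k; rfl
  rw [key, Finset.card_univ, Fintype.card_embedding_eq, Fintype.card_coe,
    Fintype.card_fin, hcard, Nat.descFactorial_self]

/-- Summing over injective tuples equals `r!` times summing over `r`-subsets. -/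
lemma sum_inj_eq {β : Type*} [AddCommMonoid β] (S : Finset ℕ) (r : ℕ)
    (f : Finset ℕ → β) :
    ∑ a ∈ (Fintype.piFinset fun _ : Fin r => S).filter (fun a => Function.Injective a),
      f (Finset.image a Finset.univ)
    = ∑ A ∈ S.powersetCard r, r.factorial • f A := by
  rw [← Finset.sum_fiberwise_of_maps_to
    (g := fun a : Fin r → ℕ => Finset.image a Finset.univ)
    (t := S.powersetCard r) ?_]
  · refine Finset.sum_congr rfl fun A hA => ?_
    rw [Finset.sum_congr rfl (fun a ha => ?_), Finset.sum_const, card_fiber S r A hA]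
    simp only [Finset.mem_filter] at ha
    rw [ha.2]
  · intro a ha
    simp only [Finset.mem_filter] at ha
    rw [Finset.mem_powersetCard]
    constructor
    · intro x hx
      obtain ⟨k, _, rfl⟩ := Finset.mem_image.1 hx
      exact Fintype.mem_piFinset.1 ha.1 k
    · rw [Finset.card_image_of_injective _ ha.2, Finset.card_univ, Fintype.card_fin]

/-- double counting pairs `(A, b)` with `A` a `k`-subset and `b ∉ A`. -/
lemma sum_pair_insert {β : Type*} [AddCommMonoid β] (M : Finset ℕ) (k : ℕ)
    (f : Finset ℕ → ℕ → β) :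
    ∑ A ∈ M.powersetCard k, ∑ b ∈ M \ A, f A b
    = ∑ B ∈ M.powersetCard (k + 1), ∑ b ∈ B, f (B.erase b) b := by
  rw [Finset.sum_sigma', Finset.sum_sigma']
  refine Finset.sum_nbij' (fun p => ⟨insert p.2 p.1, p.2⟩)
    (fun q => ⟨q.1.erase q.2, q.2⟩) ?_ ?_ ?_ ?_ ?_
  · rintro ⟨A, b⟩ hp
    simp only [Finset.mem_sigma, Finset.mem_powersetCard, Finset.mem_sdiff] at hp ⊢
    obtain ⟨⟨hAM, hAc⟩, hbM, hbA⟩ := hp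
    refine ⟨⟨Finset.insert_subset hbM hAM, ?_⟩, Finset.mem_insert_self _ _⟩
    rw [Finset.card_insert_of_notMem hbA, hAc]
  · rintro ⟨B, b⟩ hq
    simp only [Finset.mem_sigma, Finset.mem_powersetCard, Finset.mem_sdiff] at hq ⊢
    obtain ⟨⟨hBM, hBc⟩, hbB⟩ := hq
    refine ⟨⟨(Finset.erase_subset _ _).trans hBM, ?_⟩, hBM hbB, Finset.notMem_erase _ _⟩
    rw [Finset.card_erase_of_mem hbB, hBc]
    rfl
  · rintro ⟨A, b⟩ hp
    simp only [Finset.mem_sigma, Finset.mem_sdiff] at hp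
    simp [Finset.erase_insert hp.2.2]
  · rintro ⟨B, b⟩ hq
    simp only [Finset.mem_sigma] at hq
    simp [Finset.insert_erase hq.2]
  · rintro ⟨A, b⟩ hp
    simp only [Finset.mem_sigma, Finset.mem_sdiff] at hp
    simp [Finset.erase_insert hp.2.2]

/-- The "unnormalized" sum over `r`-subsets of `[1, m]`. -/
noncomputable def T (m r : ℕ) : MonoidAlgebra ℂ (Finset ℕ) :=
  ∑ A ∈ (Finset.Icc 1 m).powersetCard r, MonoidAlgebra.single A (1 : ℂ)

lemma L_eq (n : ℕ) (t : ℝ) (r : ℕ) :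
    L n t r = ((r.factorial : ℂ) * ((Real.sqrt n : ℂ))⁻¹ ^ r) •
      T (Nat.floor ((n : ℝ) * t)) r := by
  rw [L, sum_inj_eq _ _ (fun A => MonoidAlgebra.single A (1:ℂ)), T, mul_smul, ← Finset.smul_sum]
  rw [Nat.cast_smul_eq_nsmul, smul_comm]

lemma T_eq_zero_of_lt (m r : ℕ) (h : m < r) : T m r = 0 := by
  rw [T, Finset.powersetCard_eq_empty.2 (by simpa using h), Finset.sum_empty]

lemma T_mul_T_one (m r : ℕ) (hr : 1 ≤ r) :
    T m r * T m 1
      = (r + 1) • T m (r + 1) + (m + 1 - r) • T m (r - 1) := by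
  classical
  set M := Finset.Icc 1 m with hM
  have hMcard : M.card = m := by rw [hM, Nat.card_Icc]; omega
  rw [T, T, Finset.sum_mul_sum]
  have step1 : ∀ A ∈ M.powersetCard r,
      ∑ B ∈ M.powersetCard 1,
        (MonoidAlgebra.single A (1:ℂ)) * MonoidAlgebra.single B (1:ℂ)
      = (∑ b ∈ M \ A, MonoidAlgebra.single (insert b A) (1:ℂ))
        + ∑ b ∈ A, MonoidAlgebra.single (A.erase b) (1:ℂ) := by
    intro A hA
    rw [Finset.mem_powersetCard] at hA
    rw [Finset.powersetCard_one, Finset.sum_map]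
    simp only [Function.Embedding.coeFn_mk]
    have : ∀ b ∈ M,
        (MonoidAlgebra.single A (1:ℂ)) * MonoidAlgebra.single {b} (1:ℂ)
        = MonoidAlgebra.single (symmDiff A {b}) (1:ℂ) := by
      intro b _
      rw [MonoidAlgebra.single_mul_single, one_mul, finset_mul_def]
    rw [Finset.sum_congr rfl this, ← Finset.sum_sdiff hA.1]
    congr 1
    · refine Finset.sum_congr rfl fun b hb => ?_
      rw [symmDiff_singleton_not_mem (Finset.mem_sdiff.1 hb).2]
    · refine Finset.sum_congr rfl fun b hb => ?_
      rw [symmDiff_singleton_mem hb]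
  rw [Finset.sum_congr rfl step1, Finset.sum_add_distrib]
  congr 1
  · -- inserting part
    rw [sum_pair_insert M r (fun A b => MonoidAlgebra.single (insert b A) (1:ℂ))]
    rw [T, Finset.smul_sum]
    refine Finset.sum_congr rfl fun B hB => ?_
    rw [Finset.mem_powersetCard] at hB
    have : ∀ b ∈ B, MonoidAlgebra.single (insert b (B.erase b)) (1:ℂ)
        = MonoidAlgebra.single B (1:ℂ) := fun b hb => by
      rw [Finset.insert_erase hb]
    rw [Finset.sum_congr rfl this, Finset.sum_const, hB.2]
  · -- erasing part
    have hr' : r - 1 + 1 = r := Nat.succ_pred_eq_of_pos hr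
    have := sum_pair_insert M (r - 1)
      (fun C _ => MonoidAlgebra.single C (1:ℂ))
    rw [hr'] at this
    rw [← this, T, Finset.smul_sum]
    refine Finset.sum_congr rfl fun C hC => ?_
    rw [Finset.mem_powersetCard] at hC
    rw [Finset.sum_const, Finset.card_sdiff_of_subset hC.1, hMcard, hC.2]
    congr 1
    omega

/-- In `ℂ[𝒢]`: `L r (n,t) · L 1 (n,t) = L (r+1) (n,t) + ((⌊nt⌋ - r + 1)/n) · r · L (r-1) (n,t)`. -/
theorem L_mul_L_one (n : ℕ) (hn : 1 ≤ n) (r : ℕ) (hr : 1 ≤ r) (t : ℝ) (ht : 0 < t) :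
    L n t r * L n t 1
      = L n t (r + 1)
        + ((((Nat.floor ((n : ℝ) * t) : ℂ) - (r : ℂ) + 1) / (n : ℂ)) * (r : ℂ)) •
            L n t (r - 1) := by
  classical
  obtain ⟨s, rfl⟩ : ∃ s, r = s + 1 := ⟨r - 1, (Nat.succ_pred_eq_of_pos hr).symm⟩
  simp only [Nat.add_sub_cancel]
  set m : ℕ := Nat.floor ((n : ℝ) * t) with hm
  set c : ℂ := ((Real.sqrt n : ℂ))⁻¹ with hc
  have hn0 : (n : ℂ) ≠ 0 := Nat.cast_ne_zero.2 (by omega)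
  have hsq : ((Real.sqrt n : ℝ) : ℂ) ^ 2 = (n : ℂ) := by
    rw [← Complex.ofReal_pow, Real.sq_sqrt (Nat.cast_nonneg n)]
    norm_num
  have hc2 : c ^ 2 = ((n : ℂ))⁻¹ := by rw [hc, inv_pow, hsq]
  have hcc : c * c * (n : ℂ) = 1 := by
    rw [← sq, hc2, inv_mul_cancel₀ hn0]
  rw [L_eq n t (s + 1), L_eq n t 1, L_eq n t (s + 1 + 1), L_eq n t s, ← hm]
  rw [smul_mul_assoc, mul_smul_comm, smul_smul, T_mul_T_one m (s + 1) (by omega),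
    smul_add]
  simp only [Nat.add_sub_cancel]
  congr 1
  · rw [← Nat.cast_smul_eq_nsmul ℂ, smul_smul]
    congr 1
    push_cast [Nat.factorial_succ, Nat.factorial_zero]
    ring
  · rw [← Nat.cast_smul_eq_nsmul ℂ, smul_smul, smul_smul]
    by_cases hcase : s + 1 ≤ m + 1
    · congr 1
      have hcast : ((m + 1 - (s + 1) : ℕ) : ℂ) = (m : ℂ) - s := by
        have : m + 1 - (s + 1) = m - s := by omega
        rw [this, Nat.cast_sub (by omega)]
      rw [hcast]
      push_cast [Nat.factorial_succ, Nat.factorial_zero]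
      linear_combination (((s.factorial : ℂ) * ((s : ℂ) + 1)) * c ^ s * ((m : ℂ) - s)) * hc2
    · have : T m s = 0 := T_eq_zero_of_lt m s (by omega)
      rw [this, smul_zero, smul_zero]
end
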